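/- arXiv:1210.7836 — 11 statements merged into one kernel-verified Lean document; each statement's English description precedes it below -/
import Mathlib

section
/- Let F be a field of characteristic p and U a finite-dimensional F^p-linear subspace of F. Then there exists an anisotropic quasilinear p-form φ over F with D(φ) = U, and φ is unique up to isomorphism of quasilinear p-forms. -/
/-!
Writing `v = ∑ vᵢ • eᵢ`, a quasilinear `p`-form `ψ` is `v ↦ ∑ vᵢ ^ p * ψ(eᵢ)`. For existence take
`φ(v) = ∑ vᵢ ^ p * bᵢ` for an `F^p`-basis `b` of `U`: its values are exactly the
`F^p`-combinations of the `bᵢ`, and linear independence makes it anisotropic. For uniqueness, if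
`D(ψ) ⊆ D(φ)`, choose `wᵢ` with `φ(wᵢ) = ψ(eᵢ)`; the linear map `eᵢ ↦ wᵢ` carries `ψ` to `φ`
and is injective when `ψ` is anisotropic. Doing this in both directions forces equal dimensions,
so the map is an isometry.
-/

open Module

structure IsQuasilinearForm (p : ℕ) {F V : Type*} [Field F] [AddCommGroup V] [Module F V]
    (φ : V → F) : Prop where
  map_add : ∀ v w, φ (v + w) = φ v + φ w
  map_smul : ∀ (c : F) v, φ (c • v) = c ^ p * φ v

namespace IsQuasilinearForm

variable {p : ℕ} {F V W : Type*} [Field F] [AddCommGroup V] [Module F V]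
  [AddCommGroup W] [Module F W] {φ : W → F} {ψ : V → F}

theorem map_zero (hφ : IsQuasilinearForm p φ) : φ 0 = 0 :=
  (AddMonoidHom.mk' φ hφ.map_add).map_zero

theorem map_sum_smul (hφ : IsQuasilinearForm p φ) {ι : Type*} (s : Finset ι) (c : ι → F)
    (w : ι → W) : φ (∑ i ∈ s, c i • w i) = ∑ i ∈ s, c i ^ p * φ (w i) :=
  (map_sum (AddMonoidHom.mk' φ hφ.map_add) _ s).trans
    (Finset.sum_congr rfl fun i _ => hφ.map_smul (c i) (w i))

theorem exists_linearMap_comp_eq_of_range_subset {ι : Type*} [Fintype ι] (b : Basis ι F V)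
    (hφ : IsQuasilinearForm p φ) (hψ : IsQuasilinearForm p ψ)
    (h : Set.range ψ ⊆ Set.range φ) : ∃ A : V →ₗ[F] W, ∀ v, φ (A v) = ψ v := by
  choose w hw using fun i => h ⟨b i, rfl⟩
  refine ⟨b.constr F w, fun v => ?_⟩
  conv_rhs => rw [← b.sum_equivFun v]
  simp only [Basis.constr_apply_fintype, hφ.map_sum_smul, hψ.map_sum_smul, hw]

theorem injective_of_comp_eq (hφ : IsQuasilinearForm p φ) (hψ : ∀ v, ψ v = 0 → v = 0)
    {A : V →ₗ[F] W} (hA : ∀ v, φ (A v) = ψ v) : Function.Injective A := by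
  rw [← LinearMap.ker_eq_bot, LinearMap.ker_eq_bot']
  exact fun v hv => hψ v (by rw [← hA, hv, hφ.map_zero])

theorem exists_linearEquiv_of_range_eq [FiniteDimensional F V] [FiniteDimensional F W]
    (hφ : IsQuasilinearForm p φ) (hψ : IsQuasilinearForm p ψ)
    (hφ₀ : ∀ w, φ w = 0 → w = 0) (hψ₀ : ∀ v, ψ v = 0 → v = 0)
    (h : Set.range ψ = Set.range φ) : ∃ e : V ≃ₗ[F] W, ∀ v, φ (e v) = ψ v := by
  obtain ⟨A, hA⟩ := exists_linearMap_comp_eq_of_range_subset (finBasis F V) hφ hψ h.subset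
  obtain ⟨B, hB⟩ := exists_linearMap_comp_eq_of_range_subset (finBasis F W) hψ hφ h.superset
  have hA_inj := injective_of_comp_eq hφ hψ₀ hA
  have hdim : finrank F V = finrank F W :=
    (LinearMap.finrank_le_finrank_of_injective hA_inj).antisymm
      (LinearMap.finrank_le_finrank_of_injective (injective_of_comp_eq hψ hφ₀ hB))
  exact ⟨A.linearEquivOfInjective hA_inj hdim, hA⟩

end IsQuasilinearForm

def diagonalForm (p : ℕ) {ι F : Type*} [Fintype ι] [Field F] (b : ι → F) (v : ι → F) : F :=
  ∑ i, v i ^ p * b i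

section diagonalForm

variable {p : ℕ} {ι F : Type*} [Fintype ι] [Field F] (b : ι → F)

theorem isQuasilinearForm_diagonalForm [Fact p.Prime] [CharP F p] :
    IsQuasilinearForm p (diagonalForm p b) where
  map_add v w := by
    simp only [diagonalForm, Pi.add_apply, add_pow_char, add_mul, Finset.sum_add_distrib]
  map_smul c v := by
    simp only [diagonalForm, Pi.smul_apply, smul_eq_mul, mul_pow, Finset.mul_sum, mul_assoc]

variable {K : Subfield F}

theorem diagonalForm_eq_sum_smul (hpow : ∀ x : F, x ^ p ∈ K) (v : ι → F) :
    diagonalForm p b v = ∑ i, (⟨v i ^ p, hpow (v i)⟩ : K) • b i :=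
  rfl

theorem eq_zero_of_diagonalForm_eq_zero (hp : p ≠ 0) (hpow : ∀ x : F, x ^ p ∈ K)
    (hb : LinearIndependent K b) (v : ι → F) (hv : diagonalForm p b v = 0) : v = 0 := by
  rw [diagonalForm_eq_sum_smul b hpow] at hv
  funext i
  have := congrArg Subtype.val (Fintype.linearIndependent_iff.mp hb _ hv i)
  exact (pow_eq_zero_iff hp).mp this

theorem pow_mem_of_coe_eq_range_pow (hK : (K : Set F) = Set.range fun x : F => x ^ p)
    (x : F) : x ^ p ∈ K := by
  change x ^ p ∈ (K : Set F)
  exact hK ▸ ⟨x, rfl⟩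

theorem range_diagonalForm (hK : (K : Set F) = Set.range fun x : F => x ^ p) :
    Set.range (diagonalForm p b) = Submodule.span K (Set.range b) := by
  have hpow := pow_mem_of_coe_eq_range_pow hK
  ext u
  simp only [SetLike.mem_coe, Submodule.mem_span_range_iff_exists_fun, Set.mem_range]
  constructor
  · rintro ⟨v, rfl⟩
    exact ⟨_, (diagonalForm_eq_sum_smul b hpow v).symm⟩
  · rintro ⟨c, rfl⟩
    have hroot (i : ι) : ∃ x : F, x ^ p = c i := by
      have hc : (c i : F) ∈ (K : Set F) := (c i).2
      rwa [hK] at hc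
    choose v hv using hroot
    exact ⟨v, Finset.sum_congr rfl fun i _ => by rw [hv]; rfl⟩

end diagonalForm

/-- For a field `F` of characteristic `p` and a finite-dimensional
`F^p`-linear subspace `U ⊆ F`, there exists an anisotropic quasilinear `p`-form `φ`
over `F` with `D(φ) = U`, and `φ` is unique up to isomorphism.  Quasilinear `p`-forms
are modeled (up to isomorphism) as maps `φ : (Fin n → F) → F` that are additive and
`p`-homogeneous; `D(φ)` is the set of values `Set.range φ`. -/
theorem stmt2 {p : ℕ} [Fact p.Prime] (F : Type*) [Field F] [CharP F p]
    (K : Subfield F) (hK : (K : Set F) = Set.range fun x : F => x ^ p)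
    (U : Submodule K F) (hU : FiniteDimensional K U) :
    ∃ (n : ℕ) (φ : (Fin n → F) → F),
      (∀ v w, φ (v + w) = φ v + φ w) ∧
      (∀ (c : F) v, φ (c • v) = c ^ p * φ v) ∧
      (∀ v, φ v = 0 → v = 0) ∧
      Set.range φ = (U : Set F) ∧
      ∀ (m : ℕ) (ψ : (Fin m → F) → F),
        (∀ v w, ψ (v + w) = ψ v + ψ w) →
        (∀ (c : F) v, ψ (c • v) = c ^ p * ψ v) →
        (∀ v, ψ v = 0 → v = 0) →
        Set.range ψ = (U : Set F) →
        ∃ e : (Fin m → F) ≃ₗ[F] (Fin n → F), ∀ v, φ (e v) = ψ v := by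
  let bU := finBasis K U
  let b : Fin (finrank K U) → F := fun i => bU i
  have hb : LinearIndependent K b := bU.linearIndependent.map' U.subtype U.ker_subtype
  have hspan : Submodule.span K (Set.range b) = U := by
    change Submodule.span K (Set.range (U.subtype ∘ bU)) = U
    rw [Set.range_comp, Submodule.span_image, bU.span_eq, Submodule.map_subtype_top]
  have hrange : Set.range (diagonalForm p b) = U := by rw [range_diagonalForm b hK, hspan]
  have hφ := isQuasilinearForm_diagonalForm (p := p) b
  have hφ₀ := eq_zero_of_diagonalForm_eq_zero b (Fact.out : p.Prime).ne_zero
    (pow_mem_of_coe_eq_range_pow hK) hb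
  refine ⟨_, diagonalForm p b, hφ.map_add, hφ.map_smul, hφ₀, hrange,
    fun m ψ hψ_add hψ_smul hψ₀ hψ_range => ?_⟩
  exact IsQuasilinearForm.exists_linearEquiv_of_range_eq hφ ⟨hψ_add, hψ_smul⟩ hφ₀ hψ₀
    (hψ_range.trans hrange.symm)
end

section
/- Let φ and ψ be anisotropic quasilinear p-forms over a field F of characteristic p. Then ψ is isomorphic to a subform of φ if and only if D(ψ) ⊆ D(φ). In particular, ψ ≅ φ if and only if D(ψ) = D(φ). -/
/-!
An additive form with trivial kernel is injective, so when `D(ψ) ⊆ D(φ)` each `ψ w` has a unique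
preimage under `φ`. Additivity and `p`-homogeneity of both forms make `w ↦ φ⁻¹ (ψ w)` linear, and
it is injective because `ψ` is. If moreover `D(φ) ⊆ D(ψ)`, the same uniqueness makes it surjective.
-/

open Function Set

theorem injective_of_map_add_of_anisotropic {G M : Type*} [AddGroup G] [AddGroup M]
    (φ : G → M) (hadd : ∀ v w, φ (v + w) = φ v + φ w) (han : ∀ v, φ v = 0 → v = 0) :
    Injective φ :=
  (injective_iff_map_eq_zero (AddMonoidHom.mk' φ hadd)).mpr han

section Preimage

variable {α β γ : Type*} {φ : β → γ} {ψ : α → γ} {f : α → β}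

theorem injective_of_comp_eq (hψinj : Injective ψ) (hf : ∀ a, φ (f a) = ψ a) : Injective f :=
  Injective.of_comp (f := φ) (by rwa [show φ ∘ f = ψ from funext hf])

theorem surjective_of_comp_eq_of_range_subset (hφinj : Injective φ) (hf : ∀ a, φ (f a) = ψ a)
    (h : range φ ⊆ range ψ) : Surjective f := by
  intro b
  obtain ⟨a, ha⟩ := h (mem_range_self b)
  exact ⟨a, hφinj (by rw [hf, ha])⟩

end Preimage

theorem exists_linearMap_comp_eq_of_range_subset {K V W : Type*} [Ring K]
    [AddCommGroup V] [Module K V] [AddCommGroup W] [Module K W] {p : ℕ} {φ : V → K} {ψ : W → K}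
    (hφadd : ∀ v w, φ (v + w) = φ v + φ w) (hφsmul : ∀ (c : K) v, φ (c • v) = c ^ p * φ v)
    (hφinj : Injective φ)
    (hψadd : ∀ v w, ψ (v + w) = ψ v + ψ w) (hψsmul : ∀ (c : K) v, ψ (c • v) = c ^ p * ψ v)
    (h : range ψ ⊆ range φ) :
    ∃ f : W →ₗ[K] V, ∀ w, φ (f w) = ψ w := by
  choose g hg using fun w => h (mem_range_self w)
  refine ⟨{ toFun := g, map_add' := fun x y => ?_, map_smul' := fun c x => ?_ }, hg⟩
  · exact hφinj (by rw [hφadd, hg, hg, hg, hψadd])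
  · exact hφinj (by rw [RingHom.id_apply, hφsmul, hg, hg, hψsmul])

theorem stmt3_general {p : ℕ} (F : Type*) [Field F]
    (V W : Type*) [AddCommGroup V] [Module F V]
    [AddCommGroup W] [Module F W]
    (φ : V → F) (ψ : W → F)
    (hφadd : ∀ v w : V, φ (v + w) = φ v + φ w)
    (hφsmul : ∀ (c : F) (v : V), φ (c • v) = c ^ p * φ v)
    (hφan : ∀ v : V, φ v = 0 → v = 0)
    (hψadd : ∀ v w : W, ψ (v + w) = ψ v + ψ w)
    (hψsmul : ∀ (c : F) (v : W), ψ (c • v) = c ^ p * ψ v)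
    (hψan : ∀ v : W, ψ v = 0 → v = 0) :
    ((∃ f : W →ₗ[F] V, Function.Injective f ∧ ∀ w, φ (f w) = ψ w) ↔
        Set.range ψ ⊆ Set.range φ) ∧
    ((∃ e : W ≃ₗ[F] V, ∀ w, φ (e w) = ψ w) ↔ Set.range ψ = Set.range φ) := by
  have hφinj := injective_of_map_add_of_anisotropic φ hφadd hφan
  have hψinj := injective_of_map_add_of_anisotropic ψ hψadd hψan
  have isometry_of_subset :=
    exists_linearMap_comp_eq_of_range_subset hφadd hφsmul hφinj hψadd hψsmul
  refine ⟨⟨?_, fun h => ?_⟩, ⟨?_, fun h => ?_⟩⟩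
  · rintro ⟨f, -, hf⟩
    rw [← funext hf]
    exact range_comp_subset_range f φ
  · obtain ⟨f, hf⟩ := isometry_of_subset h
    exact ⟨f, injective_of_comp_eq hψinj hf, hf⟩
  · rintro ⟨e, he⟩
    rw [← funext he]
    exact e.surjective.range_comp φ
  · obtain ⟨f, hf⟩ := isometry_of_subset h.le
    have hbij : Bijective f :=
      ⟨injective_of_comp_eq hψinj hf, surjective_of_comp_eq_of_range_subset hφinj hf h.ge⟩
    exact ⟨LinearEquiv.ofBijective f hbij, hf⟩

/-- Let `φ`, `ψ` be anisotropic quasilinear `p`-forms over a field `F` of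
characteristic `p`.  Then `ψ` is isomorphic to a subform of `φ` iff `D(ψ) ⊆ D(φ)`;
in particular `ψ ≅ φ` iff `D(ψ) = D(φ)`.  Here `D` is the set of represented values. -/
theorem stmt3 {p : ℕ} [Fact p.Prime] (F : Type*) [Field F] [CharP F p]
    (V W : Type*) [AddCommGroup V] [Module F V] [FiniteDimensional F V]
    [AddCommGroup W] [Module F W] [FiniteDimensional F W]
    (φ : V → F) (ψ : W → F)
    (hφadd : ∀ v w : V, φ (v + w) = φ v + φ w)
    (hφsmul : ∀ (c : F) (v : V), φ (c • v) = c ^ p * φ v)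
    (hφan : ∀ v : V, φ v = 0 → v = 0)
    (hψadd : ∀ v w : W, ψ (v + w) = ψ v + ψ w)
    (hψsmul : ∀ (c : F) (v : W), ψ (c • v) = c ^ p * ψ v)
    (hψan : ∀ v : W, ψ v = 0 → v = 0) :
    ((∃ f : W →ₗ[F] V, Function.Injective f ∧ ∀ w, φ (f w) = ψ w) ↔
        Set.range ψ ⊆ Set.range φ) ∧
    ((∃ e : W ≃ₗ[F] V, ∀ w, φ (e w) = ψ w) ↔ Set.range ψ = Set.range φ) :=
  stmt3_general F V W φ ψ hφadd hφsmul hφan hψadd hψsmul hψan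
end

section
/- Let φ and ψ be anisotropic quasilinear p-forms over a field F of characteristic p. Then the defect index of the direct sum φ ⊕ ψ equals the F^p-dimension of the intersection D(φ) ∩ D(ψ). -/
/-!
Over `K = F^p` a quasilinear `p`-form is a semilinear map `V → F` along the Frobenius
isomorphism `F ≃+* K`, and anisotropy is injectivity. An isotropic vector `(v, w)` of `φ ⊕ ψ`
is determined by the common value `φ v = ψ (-w)`, so `(v, w) ↦ φ v` is a semilinear bijection
from the isotropic subspace onto `D(φ) ∩ D(ψ)`, and semilinear bijections along a ring
isomorphism preserve dimension.
-/

open Function LinearMap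

attribute [local instance] RingHomInvPair.of_ringEquiv RingHomInvPair.of_ringEquiv_symm

theorem LinearEquiv.finrank_eq_semilinear {R S M N : Type*} [Ring R] [Ring S]
    [AddCommGroup M] [Module R M] [AddCommGroup N] [Module S N]
    {σ : R →+* S} {σ' : S →+* R} [RingHomInvPair σ σ'] [RingHomInvPair σ' σ]
    (e : M ≃ₛₗ[σ] N) : Module.finrank R M = Module.finrank S N := by
  have hσ : Bijective σ :=
    ⟨LeftInverse.injective fun _ ↦ RingHomInvPair.comp_apply_eq (σ' := σ'),
      RightInverse.surjective fun _ ↦ RingHomInvPair.comp_apply_eq₂ (σ' := σ')⟩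
  simpa [Module.finrank] using congr_arg Cardinal.toNat
    (lift_rank_eq_of_equiv_equiv σ e.toAddEquiv hσ e.map_smul')

namespace LinearMap

variable {R S V W M : Type*} [Ring R] [Ring S]
    [AddCommGroup V] [Module R V] [AddCommGroup W] [Module R W] [AddCommGroup M] [Module S M]
    {σ : R →+* S}

def coprodₛₗ (φ : V →ₛₗ[σ] M) (ψ : W →ₛₗ[σ] M) : V × W →ₛₗ[σ] M :=
  φ ∘ₛₗ fst R V W + ψ ∘ₛₗ snd R V W

@[simp]
lemma coprodₛₗ_apply (φ : V →ₛₗ[σ] M) (ψ : W →ₛₗ[σ] M) (x : V × W) :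
    coprodₛₗ φ ψ x = φ x.1 + ψ x.2 := rfl

lemma coe_ker_coprodₛₗ (φ : V →ₛₗ[σ] M) (ψ : W →ₛₗ[σ] M) :
    (ker (coprodₛₗ φ ψ) : Set (V × W)) = {x | φ x.1 + ψ x.2 = 0} := rfl

variable {σ' : S →+* R} [RingHomInvPair σ σ'] [RingHomInvPair σ' σ]

noncomputable def kerCoprodₛₗEquivInfRange (φ : V →ₛₗ[σ] M) (ψ : W →ₛₗ[σ] M)
    (hφ : Injective φ) (hψ : Injective ψ) :
    ker (coprodₛₗ φ ψ) ≃ₛₗ[σ] ↥(range φ ⊓ range ψ) :=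
  LinearEquiv.ofBijective
    (((φ ∘ₛₗ fst R V W).domRestrict (ker (coprodₛₗ φ ψ))).codRestrict (range φ ⊓ range ψ)
      fun x ↦ Submodule.mem_inf.mpr ⟨mem_range_self φ _, -(x : V × W).2, by
        rw [map_neg, neg_eq_iff_add_eq_zero, add_comm]; exact x.2⟩)
    ⟨fun x y hxy ↦ by
      have h₁ : (x : V × W).1 = (y : V × W).1 := hφ (congr_arg Subtype.val hxy)
      have h₂ : (x : V × W).2 = (y : V × W).2 := by
        apply hψ
        have hx : φ (x : V × W).1 + ψ (x : V × W).2 = 0 := x.2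
        have hy : φ (y : V × W).1 + ψ (y : V × W).2 = 0 := y.2
        rw [h₁] at hx
        exact add_left_cancel (hx.trans hy.symm)
      exact Subtype.ext (Prod.ext h₁ h₂),
     fun ⟨m, hm⟩ ↦ by
      obtain ⟨⟨v, rfl⟩, w, hw⟩ := Submodule.mem_inf.mp hm
      refine ⟨⟨(v, -w), ?_⟩, rfl⟩
      rw [mem_ker, coprodₛₗ_apply, map_neg, hw, add_neg_cancel]⟩

end LinearMap

section Frobenius

variable {p : ℕ} [Fact p.Prime] {F : Type*} [Field F] [CharP F p] {K : Subfield F}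
  {V : Type*} [AddCommGroup V] [Module F V]

noncomputable def frobeniusEquivOfRangeEq (hK : (K : Set F) = Set.range fun x : F => x ^ p) :
    F ≃+* K :=
  RingEquiv.ofBijective ((frobenius F p).codRestrict K fun x ↦ by
      rw [← SetLike.mem_coe, hK]; exact ⟨x, rfl⟩)
    ⟨fun _ _ h ↦ frobenius_inj F p (congr_arg Subtype.val h), fun ⟨y, hy⟩ ↦ by
      obtain ⟨x, rfl⟩ : y ∈ Set.range fun x : F => x ^ p := hK ▸ hy
      exact ⟨x, rfl⟩⟩

def LinearMap.ofQuasilinear (hK : (K : Set F) = Set.range fun x : F => x ^ p) (φ : V → F)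
    (hadd : ∀ v w : V, φ (v + w) = φ v + φ w) (hsmul : ∀ (c : F) (v : V), φ (c • v) = c ^ p * φ v) :
    V →ₛₗ[(frobeniusEquivOfRangeEq hK : F →+* K)] F where
  toFun := φ
  map_add' := hadd
  map_smul' := hsmul

@[simp]
lemma LinearMap.coe_ofQuasilinear (hK : (K : Set F) = Set.range fun x : F => x ^ p) (φ : V → F)
    (hadd : ∀ v w : V, φ (v + w) = φ v + φ w) (hsmul : ∀ (c : F) (v : V), φ (c • v) = c ^ p * φ v) :
    ⇑(LinearMap.ofQuasilinear hK φ hadd hsmul) = φ := rfl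

end Frobenius

theorem stmt4_general {p : ℕ} [Fact p.Prime] (F : Type*) [Field F] [CharP F p]
    (K : Subfield F) (hK : (K : Set F) = Set.range fun x : F => x ^ p)
    (V W : Type*) [AddCommGroup V] [Module F V]
    [AddCommGroup W] [Module F W]
    (φ : V → F) (ψ : W → F)
    (hφadd : ∀ v w : V, φ (v + w) = φ v + φ w)
    (hφsmul : ∀ (c : F) (v : V), φ (c • v) = c ^ p * φ v)
    (hφan : ∀ v : V, φ v = 0 → v = 0)
    (hψadd : ∀ v w : W, ψ (v + w) = ψ v + ψ w)
    (hψsmul : ∀ (c : F) (v : W), ψ (c • v) = c ^ p * ψ v)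
    (hψan : ∀ v : W, ψ v = 0 → v = 0) :
    Module.finrank F
        (Submodule.span F {x : V × W | φ x.1 + ψ x.2 = 0}) =
      Module.finrank K
        ↥(Submodule.span K (Set.range φ) ⊓ Submodule.span K (Set.range ψ)) := by
  let Φ := LinearMap.ofQuasilinear hK φ hφadd hφsmul
  let Ψ := LinearMap.ofQuasilinear hK ψ hψadd hψsmul
  have hspan : Submodule.span F {x : V × W | φ x.1 + ψ x.2 = 0} = ker (coprodₛₗ Φ Ψ) := by
    have hker := coe_ker_coprodₛₗ Φ Ψ
    simp only [Φ, Ψ, coe_ofQuasilinear] at hker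
    rw [← hker, Submodule.span_eq]
  have hφ : Submodule.span K (Set.range φ) = range Φ := by
    rw [← coe_ofQuasilinear hK φ hφadd hφsmul, ← coe_range, Submodule.span_eq]
  have hψ : Submodule.span K (Set.range ψ) = range Ψ := by
    rw [← coe_ofQuasilinear hK ψ hψadd hψsmul, ← coe_range, Submodule.span_eq]
  rw [hspan, hφ, hψ]
  exact (kerCoprodₛₗEquivInfRange Φ Ψ ((injective_iff_map_eq_zero Φ).mpr hφan)
    ((injective_iff_map_eq_zero Ψ).mpr hψan)).finrank_eq_semilinear

/-- For anisotropic quasilinear `p`-forms `φ`, `ψ` over a field `F` of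
characteristic `p`, the defect index of `φ ⊕ ψ` equals the `F^p`-dimension of
`D(φ) ∩ D(ψ)`.  Here `K = F^p`, the defect index is the `F`-dimension of the
(sub)space of isotropic vectors of `(v, w) ↦ φ v + ψ w`, and `D` of a form is the
`K`-span of its set of values (which is already a `K`-subspace). -/
theorem stmt4 {p : ℕ} [Fact p.Prime] (F : Type*) [Field F] [CharP F p]
    (K : Subfield F) (hK : (K : Set F) = Set.range fun x : F => x ^ p)
    (V W : Type*) [AddCommGroup V] [Module F V] [FiniteDimensional F V]
    [AddCommGroup W] [Module F W] [FiniteDimensional F W]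
    (φ : V → F) (ψ : W → F)
    (hφadd : ∀ v w : V, φ (v + w) = φ v + φ w)
    (hφsmul : ∀ (c : F) (v : V), φ (c • v) = c ^ p * φ v)
    (hφan : ∀ v : V, φ v = 0 → v = 0)
    (hψadd : ∀ v w : W, ψ (v + w) = ψ v + ψ w)
    (hψsmul : ∀ (c : F) (v : W), ψ (c • v) = c ^ p * ψ v)
    (hψan : ∀ v : W, ψ v = 0 → v = 0) :
    Module.finrank F
        (Submodule.span F {x : V × W | φ x.1 + ψ x.2 = 0}) =
      Module.finrank K
        ↥(Submodule.span K (Set.range φ) ⊓ Submodule.span K (Set.range ψ)) :=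
  stmt4_general F K hK V W φ ψ hφadd hφsmul hφan hψadd hψsmul hψan
end

section
/- Let F be a field of characteristic p and a₁, ..., aₙ ∈ F. The quasi-Pfister form ⟪a₁,...,aₙ⟫ (the tensor product of the forms ⟨1, aᵢ, aᵢ², ..., aᵢ^{p-1}⟩) is anisotropic if and only if [F^p(a₁,...,aₙ) : F^p] = p^n. -/
open scoped BigOperators

/-- Coefficients of the quasi-Pfister form `⟪a₁,…,aₙ⟫ = ⨂ᵢ ⟨1, aᵢ, …, aᵢ^{p-1}⟩`:
indexed by exponent vectors `e : Fin n → Fin p`, the coefficient is `∏ i, aᵢ^{eᵢ}`. -/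
def pfCoeff {F : Type*} [Field F] {p n : ℕ} (a : Fin n → F) : (Fin n → Fin p) → F :=
  fun e => ∏ i, a i ^ (e i : ℕ)

/-!
Since the `p`-th powers `x_e ^ p` run exactly over `K = F^p` and `x ↦ x ^ p` is
injective, the form is anisotropic iff the `p ^ n` monomials `∏ aᵢ^{eᵢ}` (`0 ≤ eᵢ < p`)
are linearly independent over `K`. Because `aᵢ ^ p ∈ K`, every monomial in the `aᵢ` is a
`K`-multiple of one with exponents reduced mod `p`, so these monomials span
`K[a₁,…,aₙ] = K(a₁,…,aₙ)`; they are independent iff this field has dimension `p ^ n`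
over `K`.
-/

section

variable {F : Type*} [Field F] {p : ℕ} [NeZero p]

theorem linearIndependent_iff_forall_sum_mul_pow_eq_zero {ι : Type*} [Fintype ι]
    (K : Subfield F) (hK : (K : Set F) = Set.range fun x : F => x ^ p) (c : ι → F) :
    LinearIndependent K c ↔ ∀ x : ι → F, ∑ i, c i * x i ^ p = 0 → x = 0 := by
  have hpow (x : F) : x ^ p ∈ K := show x ^ p ∈ (K : Set F) from hK ▸ ⟨x, rfl⟩
  have hroot (k : K) : ∃ y : F, y ^ p = k := by
    simpa only [← SetLike.mem_coe, hK, Set.mem_range] using k.2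
  rw [Fintype.linearIndependent_iff]
  constructor
  · intro h x hx
    funext i
    have hxi := h (fun i => ⟨x i ^ p, hpow (x i)⟩)
      (by simpa [Subfield.smul_def, mul_comm] using hx) i
    exact pow_eq_zero_iff (NeZero.ne p) |>.1 (congrArg Subtype.val hxi)
  · intro h g hg i
    choose y hy using fun i => hroot (g i)
    have hyi := congrFun (h y (by simpa [hy, Subfield.smul_def, mul_comm] using hg)) i
    ext
    simp [← hy, hyi, NeZero.ne p]

variable {n : ℕ}

theorem prod_pow_eq_pow_mul_pfCoeff (a : Fin n → F) (k : Fin n → ℕ) :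
    ∏ i, a i ^ k i = (∏ i, a i ^ (k i / p)) ^ p * pfCoeff a (fun i => Fin.ofNat p (k i)) := by
  simp only [pfCoeff, Fin.val_ofNat, ← Finset.prod_pow, ← Finset.prod_mul_distrib, ← pow_mul,
    ← pow_add, Nat.div_add_mod']

theorem span_pfCoeff_eq_adjoin {K : Type*} [CommSemiring K] [Algebra K F] (a : Fin n → F)
    (ha : ∀ i, a i ^ p ∈ (⊥ : Subalgebra K F)) :
    Submodule.span K (Set.range (pfCoeff (p := p) a)) =
      Subalgebra.toSubmodule (Algebra.adjoin K (Set.range a)) := by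
  refine le_antisymm (Submodule.span_le.2 ?_) ?_
  · rintro _ ⟨e, rfl⟩
    exact Subalgebra.prod_mem _ fun i _ =>
      Subalgebra.pow_mem _ (Algebra.subset_adjoin (Set.mem_range_self i)) _
  · rw [Algebra.adjoin_eq_span, Submodule.span_le]
    rintro _ hx
    obtain ⟨k, rfl⟩ := Submonoid.mem_closure_range_iff_of_fintype.1 hx
    have hpow : (∏ i, a i ^ (k i / p)) ^ p ∈ (⊥ : Subalgebra K F) := by
      simp_rw [← Finset.prod_pow, ← pow_mul, mul_comm _ p, pow_mul]
      exact Subalgebra.prod_mem _ fun i _ => Subalgebra.pow_mem _ (ha i) _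
    obtain ⟨r, hr⟩ := Algebra.mem_bot.1 hpow
    rw [SetLike.mem_coe, prod_pow_eq_pow_mul_pfCoeff (p := p), ← hr, ← Algebra.smul_def]
    exact Submodule.smul_mem _ r (Submodule.subset_span ⟨_, rfl⟩)

theorem finrank_adjoin_eq_finrank_range_pfCoeff {K : Type*} [Field K] [Algebra K F]
    (a : Fin n → F) (ha : ∀ i, a i ^ p ∈ (⊥ : Subalgebra K F)) :
    Module.finrank K (IntermediateField.adjoin K (Set.range a)) =
      (Set.range (pfCoeff (p := p) a)).finrank K := by
  have halg : ∀ x ∈ Set.range a, IsAlgebraic K x := by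
    rintro _ ⟨i, rfl⟩
    obtain ⟨r, hr⟩ := Algebra.mem_bot.1 (ha i)
    exact IsAlgebraic.of_pow (NeZero.pos p) (hr ▸ isAlgebraic_algebraMap r)
  rw [Set.finrank, span_pfCoeff_eq_adjoin a ha,
    ← IntermediateField.adjoin_toSubalgebra_of_isAlgebraic halg]
  exact Subalgebra.finrank_toSubmodule (IntermediateField.adjoin K (Set.range a)).toSubalgebra

end

theorem stmt5_general {p : ℕ} [Fact p.Prime] (F : Type*) [Field F]
    (K : Subfield F) (hK : (K : Set F) = Set.range fun x : F => x ^ p)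
    (n : ℕ) (a : Fin n → F) :
    (∀ x : (Fin n → Fin p) → F, ∑ e, pfCoeff a e * x e ^ p = 0 → x = 0) ↔
      Module.finrank K (IntermediateField.adjoin K (Set.range a)) = p ^ n := by
  have : NeZero p := ⟨(Fact.out : p.Prime).ne_zero⟩
  have ha (i : Fin n) : a i ^ p ∈ (⊥ : Subalgebra K F) :=
    have hai : a i ^ p ∈ (K : Set F) := hK ▸ ⟨a i, rfl⟩
    Algebra.mem_bot.2 ⟨⟨a i ^ p, hai⟩, rfl⟩
  rw [← linearIndependent_iff_forall_sum_mul_pow_eq_zero K hK,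
    linearIndependent_iff_card_eq_finrank_span,
    ← finrank_adjoin_eq_finrank_range_pfCoeff a ha,
    Fintype.card_fun, Fintype.card_fin, Fintype.card_fin, eq_comm]

/-- The quasi-Pfister form `⟪a₁,…,aₙ⟫` over a field `F` of characteristic
`p` is anisotropic iff `[F^p(a₁,…,aₙ) : F^p] = p^n`.  Here `K = F^p` is the subfield of
`p`-th powers and anisotropy means the only isotropic vector is `0`. -/
theorem stmt5 {p : ℕ} [Fact p.Prime] (F : Type*) [Field F] [CharP F p]
    (K : Subfield F) (hK : (K : Set F) = Set.range fun x : F => x ^ p)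
    (n : ℕ) (a : Fin n → F) :
    (∀ x : (Fin n → Fin p) → F, ∑ e, pfCoeff a e * x e ^ p = 0 → x = 0) ↔
      Module.finrank K (IntermediateField.adjoin K (Set.range a)) = p ^ n :=
  stmt5_general F K hK n a
end

section
/- Let φ be a quasilinear p-form over a field F of characteristic p, and let L be a separable field extension of F. If φ is anisotropic over F, then φ_L (the scalar extension of φ to L) is anisotropic over L. -/
/-!
Choose `p`-th roots `bᵢ` of the coefficients `aᵢ` in an algebraic closure `F̄`. Since
`(Σ cᵢ bᵢ)^p = Σ aᵢ cᵢ^p`, anisotropy of `φ` makes the `bᵢ` linearly independent over `F`.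
If `φ_L(x) = 0`, then `t = Σ xᵢ ⊗ bᵢ ∈ L ⊗_F F̄` satisfies `t^p = φ_L(x) ⊗ 1 = 0`, so `t = 0`
because `L ⊗_F F̄` is reduced; as `1 ⊗ bᵢ` stay linearly independent over `L`, all `xᵢ` vanish.
-/

open scoped TensorProduct

theorem linearIndependent_of_pow_eq_algebraMap {p : ℕ} [Fact p.Prime] {F K ι : Type*} [Field F]
    [CharP F p] [CommRing K] [Nontrivial K] [Algebra F K] [Fintype ι] {a : ι → F}
    (haniso : ∀ c : ι → F, ∑ i, a i * c i ^ p = 0 → c = 0) {b : ι → K}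
    (hb : ∀ i, b i ^ p = algebraMap F K (a i)) : LinearIndependent F b := by
  have : CharP K p := (Algebra.charP_iff F K p).mp inferInstance
  rw [Fintype.linearIndependent_iff]
  intro c hc
  have hpow : (∑ i, c i • b i) ^ p = algebraMap F K (∑ i, a i * c i ^ p) := by
    rw [sum_pow_char, map_sum]
    refine Finset.sum_congr rfl fun i _ ↦ ?_
    rw [smul_pow, hb, Algebra.smul_def, map_mul, map_pow, mul_comm]
  rw [hc, zero_pow (Fact.out : p.Prime).ne_zero, eq_comm,
    map_eq_zero_iff _ (algebraMap F K).injective] at hpow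
  exact congrFun (haniso c hpow)

theorem sum_tmul_pow_eq_tmul_one {p : ℕ} {F A B ι : Type*} [CommSemiring F]
    [CommSemiring A] [CommSemiring B] [Algebra F A] [Algebra F B] [ExpChar (A ⊗[F] B) p]
    [Fintype ι] (a : ι → F) (x : ι → A) {b : ι → B} (hb : ∀ i, b i ^ p = algebraMap F B (a i)) :
    (∑ i, x i ⊗ₜ[F] b i) ^ p = (∑ i, algebraMap F A (a i) * x i ^ p) ⊗ₜ[F] (1 : B) := by
  simp only [sum_pow_char, Algebra.TensorProduct.tmul_pow, hb, TensorProduct.sum_tmul,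
    Algebra.algebraMap_eq_smul_one, TensorProduct.tmul_smul, TensorProduct.smul_tmul',
    smul_mul_assoc, one_mul]

theorem eq_zero_of_sum_tmul_eq_zero {F L M ι : Type*} [CommRing F] [Ring L] [Algebra F L]
    [Module.Flat F L] [AddCommGroup M] [Module F M] [Fintype ι] {b : ι → M}
    (hb : LinearIndependent F b) {x : ι → L} (hx : ∑ i, x i ⊗ₜ[F] b i = 0) : x = 0 := by
  have hb' := Module.Flat.linearIndependent_one_tmul (S := L) hb
  rw [Fintype.linearIndependent_iff] at hb'
  refine funext (hb' x ?_)
  simpa only [TensorProduct.smul_tmul', smul_eq_mul, mul_one] using hx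

/-- Let `φ` be a quasilinear `p`-form over a field `F` of characteristic
`p` (modeled, up to isomorphism, as a diagonal form `x ↦ Σ aᵢ xᵢ^p`) and let `L/F` be
a separable field extension (i.e. `L ⊗_F F̄` is reduced for an algebraic closure `F̄`).
If `φ` is anisotropic over `F`, then the scalar extension `φ_L` is anisotropic. -/
theorem stmt7 {p : ℕ} [Fact p.Prime] (F : Type*) [Field F] [CharP F p]
    (L : Type*) [Field L] [Algebra F L]
    (hsep : IsReduced (L ⊗[F] (AlgebraicClosure F)))
    (n : ℕ) (a : Fin n → F)
    (haniso : ∀ x : Fin n → F, ∑ i, a i * x i ^ p = 0 → x = 0) :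
    ∀ x : Fin n → L, ∑ i, algebraMap F L (a i) * x i ^ p = 0 → x = 0 := by
  intro x hx
  choose b hb using fun i ↦
    IsAlgClosed.exists_pow_nat_eq (algebraMap F (AlgebraicClosure F) (a i))
      (Fact.out : p.Prime).pos
  have : CharP (L ⊗[F] AlgebraicClosure F) p := (Algebra.charP_iff F _ p).mp inferInstance
  have hnil : IsNilpotent (∑ i, x i ⊗ₜ[F] b i) :=
    ⟨p, by rw [sum_tmul_pow_eq_tmul_one a x hb, hx, TensorProduct.zero_tmul]⟩
  have hindep := linearIndependent_of_pow_eq_algebraMap haniso hb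
  exact eq_zero_of_sum_tmul_eq_zero hindep (hsep.eq_zero _ hnil)
end

section
/- Let φ be a quasilinear p-form over a field F of characteristic p and a ∈ F \ F^p. Then p · i₀(φ_{F(a^{1/p})}) = i₀(⟪a⟫ ⊗ φ), where i₀ denotes the defect index. Consequently, if φ is anisotropic over F, then dim (φ_{F(a^{1/p})})_an ≥ (1/p)·dim φ. -/
open scoped BigOperators

/-- Defect index of the diagonal quasilinear `p`-form with coefficients `b`: the
dimension of the (sub)space of isotropic vectors (which is spanned by them). -/
noncomputable def defectIdx (p : ℕ) (K : Type*) [Field K] {ι : Type*} [Fintype ι]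
    (b : ι → K) : ℕ :=
  Module.finrank K (Submodule.span K {x : ι → K | ∑ i, b i * x i ^ p = 0})

/-!
Write a vector of `F_a = F(α)`, `α ^ p = a`, in the basis `1, α, …, α ^ (p - 1)`. Since
Frobenius is additive, `(∑ xⱼ αʲ) ^ p = ∑ aʲ xⱼ ^ p ∈ F`, so the coordinate isomorphism
`F ^ (p n) ≃ F_a ^ n` carries the isotropic vectors of `⟪a⟫ ⊗ φ` onto those of `φ_{F_a}`;
comparing `F`-dimensions of these subspaces gives `p · i₀(φ_{F_a}) = i₀(⟪a⟫ ⊗ φ)`. If `φ` is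
anisotropic, its copy `⟨1⟩ ⊗ φ` inside `⟪a⟫ ⊗ φ` meets the isotropic subspace trivially, whence
`i₀(⟪a⟫ ⊗ φ) ≤ (p - 1) n`.
-/

open Module

section IsotropicSubspace

variable {ι κ : Type*} [Fintype ι] [Fintype κ]

def isotropicSubspace (p : ℕ) (K : Type*) [CommSemiring K] [ExpChar K p] (b : ι → K) :
    Submodule K (ι → K) where
  carrier := {x | ∑ i, b i * x i ^ p = 0}
  add_mem' {x y} hx hy := by
    simp only [Set.mem_ofPred_eq, Pi.add_apply, add_pow_expChar, mul_add,
      Finset.sum_add_distrib] at hx hy ⊢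
    rw [hx, hy, add_zero]
  zero_mem' := by simp [zero_pow (expChar_pos K p).ne']
  smul_mem' t x hx := by
    simp only [Set.mem_ofPred_eq, Pi.smul_apply, smul_eq_mul, mul_pow, mul_left_comm _ (t ^ p),
      ← Finset.mul_sum] at hx ⊢
    rw [hx, mul_zero]

variable {p : ℕ} {K : Type*}

theorem mem_isotropicSubspace [CommSemiring K] [ExpChar K p] {b : ι → K} {x : ι → K} :
    x ∈ isotropicSubspace p K b ↔ ∑ i, b i * x i ^ p = 0 :=
  Iff.rfl

variable [Field K] [ExpChar K p]

theorem defectIdx_eq_finrank_isotropicSubspace (b : ι → K) :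
    defectIdx p K b = finrank K (isotropicSubspace p K b) := by
  rw [defectIdx, ← Submodule.span_eq (isotropicSubspace p K b)]
  rfl

theorem defectIdx_add_card_le_of_anisotropic_comp (b : κ → K) {e : ι → κ}
    (he : e.Injective) (hanis : ∀ y : ι → K, ∑ i, b (e i) * y i ^ p = 0 → y = 0) :
    defectIdx p K b + Fintype.card ι ≤ Fintype.card κ := by
  let U := LinearMap.range (Function.ExtendByZero.linearMap K e)
  have hU : finrank K U = Fintype.card ι := by
    rw [LinearMap.finrank_range_of_inj (Function.extend_injective he (0 : κ → K)),
      finrank_fintype_fun_eq_card]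
  have hdisj : Disjoint (isotropicSubspace p K b) U := by
    rw [Submodule.disjoint_def]
    rintro _ hx ⟨y, rfl⟩
    have hsum : ∑ i, b (e i) * y i ^ p = 0 := by
      rw [← mem_isotropicSubspace.mp hx]
      refine Fintype.sum_of_injective e he _ _ (fun k hk => ?_) (fun i => ?_)
      · simp [Function.extend_apply' _ _ _ hk, zero_pow (expChar_pos K p).ne']
      · simp [he.extend_apply]
    simp [hanis y hsum]
  simpa [defectIdx_eq_finrank_isotropicSubspace, hU] using
    Submodule.finrank_add_finrank_le_of_disjoint hdisj

end IsotropicSubspace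

section PurelyInseparable

variable {p : ℕ} {F L : Type*} {ι κ : Type*} [Fintype κ]

theorem sum_algebraMap_mul_pow_pow [CommSemiring F] [CommSemiring L] [Algebra F L] [ExpChar L p]
    {a : F} {α : L} (hα : α ^ p = algebraMap F L a) {m : ℕ} (x : Fin m → F) :
    (∑ j, algebraMap F L (x j) * α ^ (j : ℕ)) ^ p =
      algebraMap F L (∑ j : Fin m, a ^ (j : ℕ) * x j ^ p) := by
  rw [sum_pow_char, map_sum]
  refine Finset.sum_congr rfl fun j _ => ?_
  rw [mul_pow, ← pow_mul, mul_comm (j : ℕ), pow_mul, hα, map_mul, map_pow, map_pow, mul_comm]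

variable [Field F] [Field L] [Algebra F L]

noncomputable def Module.Basis.piProdEquiv (B : Basis κ F L) (ι : Type*) :
    (κ × ι → F) ≃ₗ[F] (ι → L) :=
  (LinearEquiv.funCongrLeft F F (Equiv.prodComm ι κ)).trans
    ((LinearEquiv.curry F F ι κ).trans (LinearEquiv.piCongrRight fun _ => B.equivFun.symm))

theorem Module.Basis.piProdEquiv_apply (B : Basis κ F L) (x : κ × ι → F) (i : ι) :
    B.piProdEquiv ι x i = ∑ j, algebraMap F L (x (j, i)) * B j := by
  simp [Module.Basis.piProdEquiv, Algebra.smul_def]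

theorem finrank_mul_defectIdx_algebraMap [Fintype ι] [ExpChar F p] {a : F} {α : L}
    (hα : α ^ p = algebraMap F L a) {m : ℕ} (B : Basis (Fin m) F L)
    (hB : ∀ j, B j = α ^ (j : ℕ)) (c : ι → F) :
    m * defectIdx p L (fun i => algebraMap F L (c i)) =
      defectIdx p F (fun ji : Fin m × ι => a ^ (ji.1 : ℕ) * c ji.2) := by
  have := expChar_of_injective_algebraMap (algebraMap F L).injective p
  let Φ := B.piProdEquiv ι
  have hform (x : Fin m × ι → F) : ∑ i, algebraMap F L (c i) * Φ x i ^ p =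
      algebraMap F L (∑ ji : Fin m × ι, a ^ (ji.1 : ℕ) * c ji.2 * x ji ^ p) := by
    simp only [Φ, B.piProdEquiv_apply, hB, sum_algebraMap_mul_pow_pow hα, ← map_mul, ← map_sum,
      Fintype.sum_prod_type_right, Finset.mul_sum, mul_left_comm (c _), mul_assoc]
  have hmap : (isotropicSubspace p F fun ji : Fin m × ι => a ^ (ji.1 : ℕ) * c ji.2).map
      (Φ : (Fin m × ι → F) →ₗ[F] ι → L) =
        (isotropicSubspace p L fun i => algebraMap F L (c i)).restrictScalars F := by
    ext y
    rw [Submodule.mem_map_equiv, Submodule.restrictScalars_mem, mem_isotropicSubspace,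
      mem_isotropicSubspace, ← Φ.apply_symm_apply y, hform, LinearEquiv.apply_symm_apply,
      map_eq_zero_iff _ (algebraMap F L).injective]
  rw [defectIdx_eq_finrank_isotropicSubspace, defectIdx_eq_finrank_isotropicSubspace,
    ← LinearEquiv.finrank_map_eq Φ, hmap, ← Module.finrank_mul_finrank F L,
    finrank_eq_card_basis B, Fintype.card_fin]
  rfl

theorem exists_basis_pow_of_adjoin_eq_top (hp : p.Prime) {a : F}
    (ha : a ∉ Set.range fun x : F => x ^ p) {α : L} (hα : α ^ p = algebraMap F L a)
    (hgen : Algebra.adjoin F {α} = ⊤) : ∃ B : Basis (Fin p) F L, ∀ j, B j = α ^ (j : ℕ) := by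
  have hmonic := Polynomial.monic_X_pow_sub_C a hp.ne_zero
  have hroot : Polynomial.aeval α (Polynomial.X ^ p - Polynomial.C a) = 0 := by simp [hα]
  have hmin := minpoly.eq_of_irreducible_of_monic
    (X_pow_sub_C_irreducible_of_prime hp fun b hb => ha ⟨b, hb⟩) hroot hmonic
  have hint : IsIntegral F α := ⟨_, hmonic, hroot⟩
  have hdim : (PowerBasis.ofAdjoinEqTop hint hgen).dim = p := by
    rw [PowerBasis.ofAdjoinEqTop_dim, ← hmin, Polynomial.natDegree_X_pow_sub_C]
  refine ⟨(PowerBasis.ofAdjoinEqTop hint hgen).basis.reindex (finCongr hdim), fun j => ?_⟩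
  rw [Basis.reindex_apply, PowerBasis.coe_basis, PowerBasis.ofAdjoinEqTop_gen]
  rfl

end PurelyInseparable

/-- Let `φ` be a quasilinear `p`-form over `F` (char `p`), `a ∈ F \ F^p`,
and `F_a = F(a^{1/p})` the purely inseparable degree-`p` extension (a field `L`
generated over `F` by an element `α` with `α^p = a`).  Then
`p · i₀(φ_{F_a}) = i₀(⟪a⟫ ⊗ φ)`, where `⟪a⟫ ⊗ φ` has coefficients `a^j · cᵢ`
(`0 ≤ j < p`).  Consequently, if `φ` is anisotropic then
`dim (φ_{F_a})_an ≥ (dim φ)/p`, i.e. `p · (dim φ − i₀(φ_{F_a})) ≥ dim φ`. -/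
theorem stmt8 {p : ℕ} [Fact p.Prime] (F : Type*) [Field F] [CharP F p]
    (a : F) (ha : a ∉ Set.range fun x : F => x ^ p)
    (L : Type*) [Field L] [Algebra F L]
    (α : L) (hα : α ^ p = algebraMap F L a) (hgen : Algebra.adjoin F {α} = ⊤)
    (n : ℕ) (c : Fin n → F) :
    p * defectIdx p L (fun i => algebraMap F L (c i)) =
      defectIdx p F (fun ji : Fin p × Fin n => a ^ (ji.1 : ℕ) * c ji.2) ∧
    ((∀ x : Fin n → F, ∑ i, c i * x i ^ p = 0 → x = 0) →
      p * (n - defectIdx p L (fun i => algebraMap F L (c i))) ≥ n) := by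
  obtain ⟨B, hB⟩ := exists_basis_pow_of_adjoin_eq_top Fact.out ha hα hgen
  have hdefect := finrank_mul_defectIdx_algebraMap hα B hB c
  refine ⟨hdefect, fun hanis => ?_⟩
  have hle := defectIdx_add_card_le_of_anisotropic_comp
    (fun ji : Fin p × Fin n => a ^ (ji.1 : ℕ) * c ji.2) (Prod.mk_right_injective (0 : Fin p))
    (by simpa using hanis)
  rw [← hdefect, Fintype.card_prod, Fintype.card_fin, Fintype.card_fin] at hle
  rw [ge_iff_le, Nat.mul_sub]
  omega
end

section
/- Let φ be an anisotropic quasilinear p-form over a field F of characteristic p and a ∈ F \ F^p. If φ becomes isotropic over F(a^{1/p}), then a ∈ D(φ_qp), i.e., a lies in the field F^p(a₂/a₁, ..., aₙ/a₁) generated over F^p by the ratios of the coefficients of any diagonalization φ ≅ ⟨a₁,...,aₙ⟩ with a₁ ≠ 0. -/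
/-!
Write each coordinate of an isotropic vector over `F(α)`, `α ^ p = a`, as `xᵢ = ∑ⱼ yᵢⱼ αʲ` with
`j < p`. Since the Frobenius is additive, `∑ᵢ cᵢ xᵢ ^ p = ∑ⱼ bⱼ aʲ` with `bⱼ = φ(y₁ⱼ, …, yₙⱼ) ∈ F`,
and anisotropy makes some `bⱼ` nonzero. Dividing by `c₀` puts these coefficients in
`M = F^p(cᵢ/c₀)`, so `a` satisfies a nonzero relation of degree `< p` over `M`. But
`a ^ p ∈ M`, and if `a ∉ M` then `X ^ p - a ^ p` is irreducible over `M`, so `1, a, …, a ^ (p-1)`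
are linearly independent over `M`.
-/

open Polynomial

section PowCharNotMem

variable {K E : Type*} [Field K] [Field E] [Algebra K E] {p : ℕ} [Fact p.Prime] [CharP E p]

theorem minpoly_eq_X_pow_sub_C_of_notMem_range {a : E} {b : K} (hb : algebraMap K E b = a ^ p)
    (ha : a ∉ Set.range (algebraMap K E)) : minpoly K a = X ^ p - C b := by
  have hp : p.Prime := Fact.out
  refine (minpoly.eq_of_irreducible_of_monic ?_ (by simp [hb])
    (monic_X_pow_sub_C b hp.ne_zero)).symm
  refine X_pow_sub_C_irreducible_of_prime hp fun d hd => ha ⟨d, frobenius_inj E p ?_⟩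
  simp [frobenius_def, ← map_pow, hd, hb]

theorem linearIndependent_pow_of_notMem_range {a : E} (hap : a ^ p ∈ Set.range (algebraMap K E))
    (ha : a ∉ Set.range (algebraMap K E)) : LinearIndependent K fun j : Fin p => a ^ (j : ℕ) := by
  obtain ⟨b, hb⟩ := hap
  have hdeg : (minpoly K a).natDegree = p := by
    rw [minpoly_eq_X_pow_sub_C_of_notMem_range hb ha, natDegree_X_pow_sub_C]
  exact hdeg ▸ linearIndependent_pow a

theorem IntermediateField.eq_zero_of_sum_mul_pow_eq_zero (M : IntermediateField K E) {a : E}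
    (hap : a ^ p ∈ M) (ha : a ∉ M) {d : Fin p → E} (hd : ∀ j, d j ∈ M)
    (h : ∑ j, d j * a ^ (j : ℕ) = 0) : d = 0 := by
  have hind := linearIndependent_pow_of_notMem_range (K := M) (a := a)
    ⟨⟨a ^ p, hap⟩, rfl⟩ fun ⟨m, hm⟩ => ha (hm ▸ m.2)
  funext j
  have hsum : ∑ j, (⟨d j, hd j⟩ : M) • a ^ (j : ℕ) = 0 := by simpa [Algebra.smul_def] using h
  simpa using congrArg Subtype.val (Fintype.linearIndependent_iff.1 hind _ hsum j)

end PowCharNotMem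

section RadicalGenerator

variable {F L : Type*} [CommRing F] [CommRing L] [Algebra F L] {p : ℕ} {a : F} {α : L}

theorem exists_eq_sum_smul_pow_of_adjoin_eq_top [Nontrivial F] (hα : α ^ p = algebraMap F L a)
    (hp : 0 < p) (hgen : Algebra.adjoin F {α} = ⊤) (x : L) :
    ∃ y : Fin p → F, x = ∑ j, y j • α ^ (j : ℕ) := by
  have hroot : aeval α (X ^ p - C a) = 0 := by simp [hα]
  have hmem : x ∈ Algebra.adjoin F {α} := hgen ▸ Algebra.mem_top
  obtain ⟨q, rfl⟩ := (Algebra.adjoin_singleton_eq_range_aeval F α ▸ hmem :)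
  have hdeg : (q %ₘ (X ^ p - C a)).natDegree < p := by
    have hne : (X ^ p - C a : F[X]) ≠ 1 := fun h =>
      hp.ne (by simpa [h] using natDegree_X_pow_sub_C (R := F) (n := p) (r := a))
    simpa using natDegree_modByMonic_lt q (monic_X_pow_sub_C a hp.ne') hne
  refine ⟨fun j => (q %ₘ (X ^ p - C a)).coeff j, ?_⟩
  change aeval α q = _
  rw [← aeval_modByMonic_eq_self_of_root hroot, aeval_eq_sum_range' hdeg,
    Fin.sum_univ_eq_sum_range (fun j => (q %ₘ (X ^ p - C a)).coeff j • α ^ j)]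

variable [Fact p.Prime] [CharP L p]

theorem sum_smul_pow_pow_char (hα : α ^ p = algebraMap F L a) (y : Fin p → F) :
    (∑ j, y j • α ^ (j : ℕ)) ^ p = algebraMap F L (∑ j, y j ^ p * a ^ (j : ℕ)) := by
  rw [sum_pow_char, map_sum]
  refine Finset.sum_congr rfl fun j _ => ?_
  rw [_root_.smul_pow, ← pow_mul, mul_comm, pow_mul, hα, Algebra.smul_def, map_mul, map_pow,
    map_pow]

theorem sum_mul_sum_smul_pow_pow_char (hα : α ^ p = algebraMap F L a) {ι : Type*} [Fintype ι]
    (c : ι → F) (y : ι → Fin p → F) :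
    ∑ i, algebraMap F L (c i) * (∑ j, y i j • α ^ (j : ℕ)) ^ p =
      algebraMap F L (∑ j, (∑ i, c i * y i j ^ p) * a ^ (j : ℕ)) := by
  simp only [sum_smul_pow_pow_char hα, ← map_mul, ← map_sum, Finset.sum_mul, Finset.mul_sum,
    mul_assoc]
  rw [Finset.sum_comm]

end RadicalGenerator

theorem div_mem_adjoin_range_div {F ι : Type*} [Field F] [Fintype ι] {p : ℕ} {K : Subfield F}
    (hK : ∀ z : F, z ^ p ∈ K) (c : ι → F) (c₀ : F) (y : ι → F) :
    (∑ i, c i * y i ^ p) / c₀ ∈ IntermediateField.adjoin K (Set.range fun i => c i / c₀) := by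
  simp only [Finset.sum_div, mul_div_right_comm]
  exact sum_mem fun i _ => mul_mem (IntermediateField.subset_adjoin _ _ ⟨i, rfl⟩)
    (IntermediateField.algebraMap_mem _ (⟨_, hK (y i)⟩ : K))

/-- Let `φ ≅ ⟨c₀,…,c_{n-1}⟩` (with `c₀ ≠ 0`) be an anisotropic quasilinear
`p`-form of dimension `n > 1` over a field `F` of characteristic `p`, and `a ∈ F ∖ F^p`.
If `φ` becomes isotropic over `F(a^{1/p})` (a field `L` generated over `F` by `α` with
`α^p = a`), then `a ∈ D(φ_qp) = F^p(c₁/c₀, …, c_{n-1}/c₀)`, the field generated over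
the subfield `K = F^p` by the ratios of the coefficients. -/
theorem stmt9 {p : ℕ} [Fact p.Prime] (F : Type*) [Field F] [CharP F p]
    (K : Subfield F) (hK : (K : Set F) = Set.range fun x : F => x ^ p)
    (a : F)
    (L : Type*) [Field L] [Algebra F L]
    (α : L) (hα : α ^ p = algebraMap F L a) (hgen : Algebra.adjoin F {α} = ⊤)
    (n : ℕ) (hn : 1 < n) (c : Fin n → F) (hc0 : c ⟨0, by omega⟩ ≠ 0)
    (haniso : ∀ x : Fin n → F, ∑ i, c i * x i ^ p = 0 → x = 0)
    (hiso : ∃ x : Fin n → L, x ≠ 0 ∧ ∑ i, algebraMap F L (c i) * x i ^ p = 0) :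
    a ∈ IntermediateField.adjoin K (Set.range fun i => c i / c ⟨0, by omega⟩) := by
  have : CharP L p := charP_of_injective_algebraMap (algebraMap F L).injective p
  have hpow_mem : ∀ z : F, z ^ p ∈ K := fun z => by rw [← SetLike.mem_coe, hK]; exact ⟨z, rfl⟩
  obtain ⟨x, hx0, hxsum⟩ := hiso
  choose y hy using fun i =>
    exists_eq_sum_smul_pow_of_adjoin_eq_top hα (Fact.out : p.Prime).pos hgen (x i)
  have hrel : ∑ j, (∑ i, c i * y i j ^ p) * a ^ (j : ℕ) = 0 := by
    apply (algebraMap F L).injective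
    rw [map_zero, ← sum_mul_sum_smul_pow_pow_char hα, ← hxsum]
    simp only [← hy]
  by_contra haM
  have hcoeff := IntermediateField.eq_zero_of_sum_mul_pow_eq_zero _
    (IntermediateField.algebraMap_mem _ (⟨_, hpow_mem a⟩ : K)) haM
    (fun j => div_mem_adjoin_range_div hpow_mem c _ (y · j))
    (by simp only [div_mul_eq_mul_div, ← Finset.sum_div, hrel, zero_div])
  have hy0 (i j) : y i j = 0 :=
    congrFun (haniso _ (by simpa [hc0] using congrFun hcoeff j)) i
  exact hx0 (funext fun i => by simp [hy i, hy0])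
end

section
/- Let φ be a quasilinear p-form over a field F of characteristic p, let a ∈ F \ F^p, and let m be a positive integer. If i₀(φ_{F(a^{1/p})}) ≥ m, then φ contains a subform ψ of dimension at most pm such that i₀(ψ_{F(a^{1/p})}) ≥ m. -/
open scoped BigOperators

/-!
Choose `m` linearly independent isotropic vectors `v₁, …, vₘ` of `φ_L` and expand each of their
coordinates in an `F`-basis of `L`. The resulting `[L : F] · m ≤ p · m` vectors of `Fⁿ` span a
subspace `W` whose `L`-span contains every `vⱼ`. Because `x ↦ x ^ p` is additive, `φ` restricted to
`W` is again diagonal in a basis of `W`, and the `vⱼ` written in that basis are `m` linearly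
independent isotropic vectors of the restricted form over `L`.
-/

open Module Submodule Set

section DefectIdx

variable {p : ℕ} {K ι : Type*} [Field K] [Fintype ι] {b : ι → K} {m : ℕ}

theorem le_defectIdx_of_linearIndependent {s : Fin m → ι → K} (hs : LinearIndependent K s)
    (hiso : ∀ j, ∑ i, b i * s j i ^ p = 0) : m ≤ defectIdx p K b :=
  calc m = finrank K (span K (range s)) := by rw [finrank_span_eq_card hs, Fintype.card_fin]
    _ ≤ defectIdx p K b := Submodule.finrank_mono (span_mono (range_subset_iff.2 hiso))

theorem exists_linearIndependent_of_le_defectIdx (h : m ≤ defectIdx p K b) :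
    ∃ v : Fin m → ι → K, LinearIndependent K v ∧ ∀ j, ∑ i, b i * v j i ^ p = 0 := by
  obtain ⟨t, hts, hspan, hind⟩ :=
    exists_linearIndependent K {x : ι → K | ∑ i, b i * x i ^ p = 0}
  have : Fintype t := hind.setFinite.fintype
  have hcard : m ≤ Fintype.card t := by
    rwa [defectIdx, ← hspan, finrank_span_set_eq_card hind, Set.toFinset_card] at h
  obtain ⟨e⟩ : Nonempty (Fin m ↪ t) :=
    Function.Embedding.nonempty_of_card_le (by simpa using hcard)
  exact ⟨fun j => e j, hind.comp e e.injective, fun j => hts (e j).2⟩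

end DefectIdx

theorem sum_mul_fintypeLinearCombination_pow {p : ℕ} {R ι κ : Type*} [CommSemiring R]
    [ExpChar R p] [Fintype ι] [Fintype κ] (c : ι → R) (u : κ → ι → R) (x : κ → R) :
    ∑ i, c i * Fintype.linearCombination R u x i ^ p = ∑ r, (∑ i, c i * u r i ^ p) * x r ^ p := by
  simp only [Fintype.linearCombination_apply, Finset.sum_apply, Pi.smul_apply, smul_eq_mul,
    sum_pow_char, mul_pow, Finset.mul_sum, Finset.sum_mul]
  rw [Finset.sum_comm]
  exact Finset.sum_congr rfl fun _ _ => Finset.sum_congr rfl fun _ _ => by ring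

theorem exists_linearIndependent_fin_span_range_eq {K V κ : Type*} [DivisionRing K]
    [AddCommGroup V] [Module K V] [Fintype κ] (w : κ → V) :
    ∃ (k : ℕ) (u : Fin k → V), k ≤ Fintype.card κ ∧ LinearIndependent K u ∧
      span K (range u) = span K (range w) := by
  set W := span K (range w)
  have : FiniteDimensional K W := FiniteDimensional.span_of_finite K (finite_range w)
  let bW := Module.finBasis K W
  refine ⟨finrank K W, W.subtype ∘ bW, finrank_range_le_card w,
    bW.linearIndependent.map' W.subtype W.ker_subtype, ?_⟩
  rw [range_comp, span_image, bW.span_eq, Submodule.map_top, range_subtype]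

section Extension

variable {F L ι : Type*} [CommSemiring F] [CommSemiring L] [Algebra F L]

theorem Module.Basis.sum_smul_algebraMap_repr {κ : Type*} [Fintype κ] (bL : Basis κ F L)
    (x : ι → L) : ∑ t, bL t • (fun i => algebraMap F L (bL.repr (x i) t)) = x := by
  funext i
  simp only [Finset.sum_apply, Pi.smul_apply, smul_eq_mul]
  conv_rhs => rw [← bL.sum_repr (x i)]
  exact Finset.sum_congr rfl fun t _ => by rw [Algebra.smul_def, mul_comm]

theorem algebraMap_comp_mem_span_range {κ : Type*} {u : κ → ι → F} {y : ι → F}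
    (hy : y ∈ span F (range u)) :
    (fun i => algebraMap F L (y i)) ∈ span L (range fun r i => algebraMap F L (u r i)) := by
  have := mem_map_of_mem (f := (Algebra.linearMap F L).compLeft ι) hy
  rw [map_span, ← range_comp] at this
  exact span_le_restrictScalars F L _ this

end Extension

theorem span_range_pow_eq_top_of_adjoin_eq_top {F L : Type*} [Field F] [Field L] [Algebra F L]
    {p : ℕ} (hp : p ≠ 0) {a : F} {α : L} (hα : α ^ p = algebraMap F L a)
    (hgen : Algebra.adjoin F {α} = ⊤) :
    span F (range fun t : Fin p => α ^ (t : ℕ)) = ⊤ := by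
  classical
  have key := span_range_natDegree_eq_adjoin (Polynomial.monic_X_pow_sub_C a hp)
    (x := α) (by simp [hα])
  rw [Polynomial.natDegree_X_pow_sub_C, hgen, Algebra.top_toSubmodule] at key
  refine Eq.trans ?_ key
  congr 1
  ext x
  simp [Fin.exists_iff]

theorem exists_subform_le_finrank_mul_of_le_defectIdx {p : ℕ} {F L : Type*} [Field F] [Field L]
    [Algebra F L] [ExpChar F p] [FiniteDimensional F L] {n m : ℕ} (c : Fin n → F)
    (h : m ≤ defectIdx p L fun i => algebraMap F L (c i)) :
    ∃ (k : ℕ) (b : Fin k → F), k ≤ finrank F L * m ∧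
      (∃ f : (Fin k → F) →ₗ[F] (Fin n → F), Function.Injective f ∧
        ∀ v : Fin k → F, ∑ i, c i * (f v) i ^ p = ∑ j, b j * v j ^ p) ∧
      m ≤ defectIdx p L fun j => algebraMap F L (b j) := by
  have : ExpChar L p := expChar_of_injective_algebraMap (algebraMap F L).injective p
  obtain ⟨v, hv, hv_iso⟩ := exists_linearIndependent_of_le_defectIdx h
  let bL := Module.finBasis F L
  let w : Fin m × Fin (finrank F L) → Fin n → F := fun q i => bL.repr (v q.1 i) q.2
  obtain ⟨k, u, hk, hu, hspan⟩ := exists_linearIndependent_fin_span_range_eq (K := F) w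
  let b : Fin k → F := fun r => ∑ i, c i * u r i ^ p
  let uL : Fin k → Fin n → L := fun r i => algebraMap F L (u r i)
  have hv_mem : ∀ j, v j ∈ span L (range uL) := fun j => by
    rw [← bL.sum_smul_algebraMap_repr (v j)]
    exact sum_mem fun t _ => smul_mem _ _
      (algebraMap_comp_mem_span_range (hspan ▸ subset_span ⟨(j, t), rfl⟩))
  choose s hs using fun j => (mem_span_range_iff_exists_fun L).1 (hv_mem j)
  have hs' : Fintype.linearCombination L uL ∘ s = v :=
    funext fun j => by simp [Fintype.linearCombination_apply, hs]
  have hform_L : ∀ x, ∑ i, algebraMap F L (c i) * Fintype.linearCombination L uL x i ^ p =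
      ∑ r, algebraMap F L (b r) * x r ^ p := fun x => by
    simp [sum_mul_fintypeLinearCombination_pow, b, uL, map_sum]
  refine ⟨k, b, by simpa [mul_comm] using hk, ⟨Fintype.linearCombination F u,
    hu.fintypeLinearCombination_injective, sum_mul_fintypeLinearCombination_pow c u⟩, ?_⟩
  refine le_defectIdx_of_linearIndependent (.of_comp _ (hs' ▸ hv)) fun j => ?_
  rw [← hform_L, ← hv_iso j, ← hs', Function.comp_apply]

theorem stmt10_general {p : ℕ} [Fact p.Prime] (F : Type*) [Field F] [CharP F p]
    (a : F) (L : Type*) [Field L] [Algebra F L]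
    (α : L) (hα : α ^ p = algebraMap F L a) (hgen : Algebra.adjoin F {α} = ⊤)
    (n : ℕ) (c : Fin n → F) (m : ℕ)
    (h : m ≤ defectIdx p L fun i => algebraMap F L (c i)) :
    ∃ (k : ℕ) (b : Fin k → F), k ≤ p * m ∧
      (∃ f : (Fin k → F) →ₗ[F] (Fin n → F), Function.Injective f ∧
        ∀ v : Fin k → F, ∑ i, c i * (f v) i ^ p = ∑ j, b j * v j ^ p) ∧
      m ≤ defectIdx p L fun j => algebraMap F L (b j) := by
  have hspan := span_range_pow_eq_top_of_adjoin_eq_top (Fact.out : p.Prime).ne_zero hα hgen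
  have : FiniteDimensional F L := .of_surjective
    (Fintype.linearCombination F fun t : Fin p => α ^ (t : ℕ))
    (by rw [← LinearMap.range_eq_top, Fintype.range_linearCombination, hspan])
  obtain ⟨k, b, hk, hf, hb⟩ := exists_subform_le_finrank_mul_of_le_defectIdx c h
  have hdeg : finrank F L ≤ p := (finrank_le_of_span_eq_top hspan).trans_eq (Fintype.card_fin p)
  exact ⟨k, b, hk.trans (Nat.mul_le_mul_right m hdeg), hf, hb⟩

/-- Let `φ` be a quasilinear `p`-form over `F` (char `p`), given in
diagonal form `⟨c₀,…,c_{n-1}⟩`, let `a ∈ F ∖ F^p` with purely inseparable extension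
`L = F(a^{1/p})`, and `m ≥ 1`.  If `i₀(φ_L) ≥ m`, then `φ` contains a subform `ψ`
(given, up to isomorphism, by a diagonal form `⟨b₀,…,b_{k-1}⟩` embedded in `φ` by an
injective linear map) of dimension `k ≤ p·m` with `i₀(ψ_L) ≥ m`. -/
theorem stmt10 {p : ℕ} [Fact p.Prime] (F : Type*) [Field F] [CharP F p]
    (a : F) (ha : a ∉ Set.range fun x : F => x ^ p)
    (L : Type*) [Field L] [Algebra F L]
    (α : L) (hα : α ^ p = algebraMap F L a) (hgen : Algebra.adjoin F {α} = ⊤)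
    (n : ℕ) (c : Fin n → F) (m : ℕ) (hm : 0 < m)
    (h : m ≤ defectIdx p L fun i => algebraMap F L (c i)) :
    ∃ (k : ℕ) (b : Fin k → F), k ≤ p * m ∧
      (∃ f : (Fin k → F) →ₗ[F] (Fin n → F), Function.Injective f ∧
        ∀ v : Fin k → F, ∑ i, c i * (f v) i ^ p = ∑ j, b j * v j ^ p) ∧
      m ≤ defectIdx p L fun j => algebraMap F L (b j) :=
  stmt10_general F a L α hα hgen n c m h
end

section
/- Let p = 2, F a field of characteristic 2, φ an anisotropic quasilinear quadratic form over F, a ∈ F \ F², and m a positive integer. Then i₀(φ_{F(√a)}) ≥ m if and only if there exists a quasilinear quadratic form τ of dimension m over F such that ⟨1,a⟩ ⊗ τ is isomorphic to a subform of φ. -/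
/-!
Write `L = F ⊕ F α`. Every vector of `Lⁿ` is `y + α z` with `y, z ∈ Fⁿ`, and since `φ` is additive
in characteristic 2, `φ(y + α z) = φ(y) + a φ(z)`; in particular the isotropic vectors of `φ_L`
form an `L`-subspace. An isotropic vector thus gives `φ(y) = a φ(z)`, so `z, y` span a copy of
`⟨1, a⟩ ⊗ ⟨φ(z)⟩` inside `φ`, and conversely. `L`-independence of isotropic vectors `yₖ + α zₖ`
corresponds to `F`-independence of the `2m` vectors `zₖ, yₖ`: one way because `1, α` is an
`F`-basis of `L`, the other because an `L`-combination of isotropic vectors lying in `Fⁿ` is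
isotropic for `φ` itself, hence zero by anisotropy.
-/

open scoped BigOperators

open Module

section Quasilinear

variable {K : Type*} [Field K] (p : ℕ) [Fact p.Prime] [CharP K p] {ι : Type*} [Fintype ι]

def isotropicSubmodule (b : ι → K) : Submodule K (ι → K) where
  carrier := {x | ∑ i, b i * x i ^ p = 0}
  add_mem' {x y} hx hy := by
    simp only [Set.mem_ofPred_eq, Pi.add_apply, add_pow_char, mul_add,
      Finset.sum_add_distrib] at hx hy ⊢
    rw [hx, hy, add_zero]
  zero_mem' := by simp [(Fact.out : p.Prime).ne_zero]
  smul_mem' t x hx := by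
    simp only [Set.mem_ofPred_eq, Pi.smul_apply, smul_eq_mul, mul_pow, mul_left_comm _ (t ^ p),
      ← Finset.mul_sum] at hx ⊢
    rw [hx, mul_zero]

theorem mem_isotropicSubmodule {b x : ι → K} :
    x ∈ isotropicSubmodule p b ↔ ∑ i, b i * x i ^ p = 0 := Iff.rfl

theorem defectIdx_eq_finrank_isotropicSubmodule (b : ι → K) :
    defectIdx p K b = finrank K (isotropicSubmodule p b) := by
  rw [defectIdx, ← Submodule.span_eq (isotropicSubmodule p b)]
  rfl

theorem sum_mul_linearCombination_pow {κ : Type*} [Fintype κ] (b : ι → K) (g : κ → ι → K)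
    (v : κ → K) :
    ∑ i, b i * Fintype.linearCombination K g v i ^ p = ∑ j, (∑ i, b i * g j i ^ p) * v j ^ p := by
  simp only [Fintype.linearCombination_apply, Finset.sum_apply, Pi.smul_apply, smul_eq_mul,
    sum_pow_char, mul_pow, Finset.mul_sum, Finset.sum_mul]
  rw [Finset.sum_comm]
  exact Finset.sum_congr rfl fun _ _ => Finset.sum_congr rfl fun _ _ => by ring

end Quasilinear

section QuadraticExtension

variable {F L : Type*} [Field F] [Field L] [Algebra F L] {a : F} {α : L}

theorem exists_eq_add_mul_of_adjoin_eq_top (hα : α ^ 2 = algebraMap F L a)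
    (hgen : Algebra.adjoin F {α} = ⊤) (x : L) :
    ∃ y z : F, x = algebraMap F L y + algebraMap F L z * α := by
  let S := Submodule.span F ({1, α} : Set L)
  have hmul : ∀ u v : L, u ∈ S → v ∈ S → u * v ∈ S := by
    intro u v hu hv
    obtain ⟨p, q, rfl⟩ := Submodule.mem_span_pair.1 hu
    obtain ⟨r, s, rfl⟩ := Submodule.mem_span_pair.1 hv
    refine Submodule.mem_span_pair.2 ⟨p * r + q * s * a, p * s + q * r, ?_⟩
    simp only [Algebra.smul_def, map_add, map_mul, mul_one]
    linear_combination (-(algebraMap F L q * algebraMap F L s)) * hα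
  let S' : Subalgebra F L := S.toSubalgebra (Submodule.subset_span (by simp)) hmul
  have hx : x ∈ S' := by
    have : Algebra.adjoin F {α} ≤ S' :=
      Algebra.adjoin_le (Set.singleton_subset_iff.2 (Submodule.subset_span (by simp)))
    exact this (hgen ▸ Algebra.mem_top)
  obtain ⟨y, z, hyz⟩ := Submodule.mem_span_pair.1 hx
  exact ⟨y, z, by simp [← hyz, Algebra.smul_def]⟩

theorem eq_zero_of_add_mul_eq_zero (hα : α ^ 2 = algebraMap F L a)
    (ha : a ∉ Set.range fun x : F => x ^ 2)
    {y z : F} (h : algebraMap F L y + algebraMap F L z * α = 0) : y = 0 ∧ z = 0 := by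
  obtain rfl | hz := eq_or_ne z 0
  · simpa using h
  refine absurd ⟨-y / z, (algebraMap F L).injective ?_⟩ ha
  have hα' : α = algebraMap F L (-y / z) := by
    rw [map_div₀, map_neg, eq_div_iff (by simpa using hz)]
    linear_combination h
  rw [map_pow, ← hα', hα]

theorem sum_add_mul_mul_add_mul (hα : α ^ 2 = algebraMap F L a) {κ : Type*} (s : Finset κ)
    (p q y z : κ → F) :
    ∑ k ∈ s, (algebraMap F L (p k) + algebraMap F L (q k) * α) *
        (algebraMap F L (y k) + algebraMap F L (z k) * α) =
      algebraMap F L (∑ k ∈ s, (p k * y k + a * q k * z k)) +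
        algebraMap F L (∑ k ∈ s, (p k * z k + q k * y k)) * α := by
  simp only [map_sum, map_add, map_mul, Finset.sum_mul, ← Finset.sum_add_distrib]
  exact Finset.sum_congr rfl fun k _ => by
    linear_combination algebraMap F L (q k) * algebraMap F L (z k) * hα

theorem sum_mul_add_mul_sq [CharP L 2] (hα : α ^ 2 = algebraMap F L a) {κ : Type*}
    (s : Finset κ) (c y z : κ → F) :
    ∑ k ∈ s, algebraMap F L (c k) * (algebraMap F L (y k) + algebraMap F L (z k) * α) ^ 2 =
      algebraMap F L (∑ k ∈ s, c k * y k ^ 2 + a * ∑ k ∈ s, c k * z k ^ 2) := by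
  simp only [map_add, map_mul, map_sum, map_pow, Finset.mul_sum, ← Finset.sum_add_distrib]
  refine Finset.sum_congr rfl fun k _ => ?_
  rw [CharTwo.add_sq, mul_pow, hα]
  ring

end QuadraticExtension

section LiftPair

variable {F L : Type*} [Field F] [Field L] [Algebra F L] {a : F} {α : L} {ι κ : Type*}

-- Indexed so that `(0, k)` and `(1, k)` carry the coefficients `bₖ` and `a bₖ` of `⟨1, a⟩ ⊗ τ`.
def liftPair (α : L) (g : Fin 2 × κ → ι → F) : κ → ι → L :=
  fun k i => algebraMap F L (g (1, k) i) + algebraMap F L (g (0, k) i) * α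

theorem sum_smul_apply_fin_two_prod [Fintype κ] (r : Fin 2 × κ → F) (g : Fin 2 × κ → ι → F)
    (i : ι) :
    (∑ jk, r jk • g jk) i = ∑ k, (r (0, k) * g (0, k) i + r (1, k) * g (1, k) i) := by
  simp [Finset.sum_apply, Fintype.sum_prod_type, Finset.sum_add_distrib]

theorem sum_smul_liftPair_apply [Fintype κ] (hα : α ^ 2 = algebraMap F L a) (p q : κ → F)
    (g : Fin 2 × κ → ι → F) (i : ι) :
    (∑ k, (algebraMap F L (p k) + algebraMap F L (q k) * α) • liftPair α g k) i =
      algebraMap F L (∑ k, (p k * g (1, k) i + a * q k * g (0, k) i)) +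
        algebraMap F L (∑ k, (p k * g (0, k) i + q k * g (1, k) i)) * α := by
  simp only [Finset.sum_apply, Pi.smul_apply, smul_eq_mul, liftPair]
  exact sum_add_mul_mul_add_mul hα _ _ _ _ _

theorem linearIndependent_liftPair [Fintype κ] (hα : α ^ 2 = algebraMap F L a)
    (ha : a ∉ Set.range fun x : F => x ^ 2) (hgen : Algebra.adjoin F {α} = ⊤)
    {g : Fin 2 × κ → ι → F} (hg : LinearIndependent F g) :
    LinearIndependent L (liftPair α g) := by
  rw [Fintype.linearIndependent_iff] at hg ⊢
  intro μ hμ k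
  choose p q hpq using fun k => exists_eq_add_mul_of_adjoin_eq_top hα hgen (μ k)
  have hμ' : ∀ i, ∑ k, (p k * g (0, k) i + q k * g (1, k) i) = 0 := fun i =>
    (eq_zero_of_add_mul_eq_zero hα ha <| by
      rw [← sum_smul_liftPair_apply hα]; simp only [← hpq, hμ, Pi.zero_apply]).2
  have hr := hg (fun jk => ![p, q] jk.1 jk.2) (funext fun i => by
    rw [sum_smul_apply_fin_two_prod]; simpa using hμ' i)
  rw [hpq, show p k = 0 from hr (0, k), show q k = 0 from hr (1, k)]
  simp

theorem linearIndependent_of_linearIndependent_liftPair [Fintype κ]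
    (hα : α ^ 2 = algebraMap F L a) (ha : a ∉ Set.range fun x : F => x ^ 2) {g : Fin 2 × κ → ι → F}
    (hx : LinearIndependent L (liftPair α g))
    (hF : ∀ w : ι → F, (fun i => algebraMap F L (w i)) ∈
      Submodule.span L (Set.range (liftPair α g)) → w = 0) :
    LinearIndependent F g := by
  rw [Fintype.linearIndependent_iff] at hx ⊢
  intro r hr
  set μ : κ → L := fun k => algebraMap F L (r (0, k)) + algebraMap F L (r (1, k)) * α
  have hrg : ∀ i, ∑ k, (r (0, k) * g (0, k) i + r (1, k) * g (1, k) i) = 0 := fun i => by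
    rw [← sum_smul_apply_fin_two_prod, hr, Pi.zero_apply]
  have hμ : ∑ k, μ k • liftPair α g k =
      fun i => algebraMap F L (∑ k, (r (0, k) * g (1, k) i + a * r (1, k) * g (0, k) i)) := by
    funext i
    rw [sum_smul_liftPair_apply hα, hrg, map_zero, zero_mul, add_zero]
  have hw := hF _ (hμ ▸ Submodule.sum_mem _ fun k _ =>
    Submodule.smul_mem _ _ (Submodule.subset_span (Set.mem_range_self k)))
  have hμ0 := hx μ (by rw [hμ]; funext i; simp [congrFun hw i])
  rintro ⟨j, k⟩
  have := eq_zero_of_add_mul_eq_zero hα ha (hμ0 k)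
  fin_cases j
  exacts [this.1, this.2]

end LiftPair

section Subform

variable {F L : Type*} [Field F] [Field L] [Algebra F L] [CharP L 2] {a : F} {α : L}
  {ι : Type*} [Fintype ι]

theorem sum_mul_liftPair_sq (hα : α ^ 2 = algebraMap F L a) (c : ι → F) {κ : Type*}
    (g : Fin 2 × κ → ι → F) (k : κ) :
    ∑ i, algebraMap F L (c i) * liftPair α g k i ^ 2 =
      algebraMap F L (∑ i, c i * g (1, k) i ^ 2 + a * ∑ i, c i * g (0, k) i ^ 2) :=
  sum_mul_add_mul_sq hα _ _ _ _

theorem le_finrank_isotropicSubmodule_of_subform (hα : α ^ 2 = algebraMap F L a)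
    (ha : a ∉ Set.range fun x : F => x ^ 2) (hgen : Algebra.adjoin F {α} = ⊤) (c : ι → F)
    {κ : Type*} [Fintype κ] (b : κ → F) (f : (Fin 2 × κ → F) →ₗ[F] (ι → F))
    (hf : Function.Injective f)
    (hfb : ∀ v : Fin 2 × κ → F,
      ∑ i, c i * (f v) i ^ 2 = ∑ ji : Fin 2 × κ, a ^ (ji.1 : ℕ) * b ji.2 * v ji ^ 2) :
    Fintype.card κ ≤ finrank L (isotropicSubmodule 2 fun i => algebraMap F L (c i)) := by
  let g : Fin 2 × κ → ι → F := f ∘ Pi.basisFun F (Fin 2 × κ)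
  have hg : LinearIndependent F g :=
    (Pi.basisFun F _).linearIndependent.map' f (LinearMap.ker_eq_bot.2 hf)
  have hgb : ∀ jk : Fin 2 × κ, ∑ i, c i * g jk i ^ 2 = a ^ (jk.1 : ℕ) * b jk.2 := fun jk => by
    classical simp [g, hfb, Pi.single_apply]
  have hmem : ∀ k, liftPair α g k ∈ isotropicSubmodule 2 fun i => algebraMap F L (c i) :=
    fun k => by
      rw [mem_isotropicSubmodule, sum_mul_liftPair_sq hα, hgb, hgb]
      simp [CharTwo.add_self_eq_zero]
  have hx : LinearIndependent L fun k => (⟨liftPair α g k, hmem k⟩ : isotropicSubmodule 2 _) :=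
    .of_comp (Submodule.subtype _) (linearIndependent_liftPair hα ha hgen hg)
  exact hx.fintype_card_le_finrank

theorem exists_subform_of_le_finrank_isotropicSubmodule (hα : α ^ 2 = algebraMap F L a)
    (ha : a ∉ Set.range fun x : F => x ^ 2) (hgen : Algebra.adjoin F {α} = ⊤) (c : ι → F)
    (haniso : ∀ x : ι → F, ∑ i, c i * x i ^ 2 = 0 → x = 0) {m : ℕ}
    (hm : m ≤ finrank L (isotropicSubmodule 2 fun i => algebraMap F L (c i))) :
    ∃ b : Fin m → F, ∃ f : (Fin 2 × Fin m → F) →ₗ[F] (ι → F),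
      Function.Injective f ∧ ∀ v : Fin 2 × Fin m → F,
        ∑ i, c i * (f v) i ^ 2 = ∑ ji : Fin 2 × Fin m, a ^ (ji.1 : ℕ) * b ji.2 * v ji ^ 2 := by
  have : CharP F 2 := (RingHom.charP_iff_charP (algebraMap F L) 2).2 ‹_›
  set W := isotropicSubmodule 2 fun i => algebraMap F L (c i) with hW
  obtain ⟨x, hx⟩ := exists_linearIndependent_of_le_finrank hm
  choose y z hyz using fun k i => exists_eq_add_mul_of_adjoin_eq_top hα hgen ((x k : ι → L) i)
  let g : Fin 2 × Fin m → ι → F := fun jk => ![z, y] jk.1 jk.2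
  have hxg : liftPair α g = fun k => (x k : ι → L) := funext₂ fun k i => (hyz k i).symm
  have hyb : ∀ k, ∑ i, c i * y k i ^ 2 = a * ∑ i, c i * z k i ^ 2 := fun k => by
    have h : liftPair α g k ∈ W := hxg ▸ (x k).2
    rw [hW, mem_isotropicSubmodule, sum_mul_liftPair_sq hα, map_eq_zero] at h
    exact CharTwo.add_eq_zero.1 h
  have hF : ∀ w : ι → F, (fun i => algebraMap F L (w i)) ∈ W → w = 0 := fun w hw => by
    refine haniso w ((algebraMap F L).injective ?_)
    simpa [hW, mem_isotropicSubmodule, map_sum] using hw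
  have hg : LinearIndependent F g := by
    refine linearIndependent_of_linearIndependent_liftPair hα ha
      (hxg ▸ hx.map' W.subtype W.ker_subtype) fun w hw => hF w ?_
    refine Submodule.span_le.2 ?_ hw
    rintro _ ⟨k, rfl⟩
    exact hxg ▸ (x k).2
  refine ⟨fun k => ∑ i, c i * z k i ^ 2, Fintype.linearCombination F g,
    linearIndependent_iff_injective_fintypeLinearCombination.1 hg, fun v => ?_⟩
  rw [sum_mul_linearCombination_pow]
  refine Fintype.sum_congr _ _ fun ⟨j, k⟩ => ?_
  fin_cases j <;> simp [g, hyb]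

end Subform

theorem stmt11_general (F : Type*) [Field F] [CharP F 2]
    (a : F) (ha : a ∉ Set.range fun x : F => x ^ 2)
    (L : Type*) [Field L] [Algebra F L]
    (α : L) (hα : α ^ 2 = algebraMap F L a) (hgen : Algebra.adjoin F {α} = ⊤)
    (n : ℕ) (c : Fin n → F)
    (haniso : ∀ x : Fin n → F, ∑ i, c i * x i ^ 2 = 0 → x = 0)
    (m : ℕ) :
    m ≤ defectIdx 2 L (fun i => algebraMap F L (c i)) ↔
      ∃ b : Fin m → F, ∃ f : (Fin 2 × Fin m → F) →ₗ[F] (Fin n → F),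
        Function.Injective f ∧
        ∀ v : Fin 2 × Fin m → F,
          ∑ i, c i * (f v) i ^ 2 = ∑ ji : Fin 2 × Fin m, a ^ (ji.1 : ℕ) * b ji.2 * v ji ^ 2 := by
  have := charP_of_injective_algebraMap (algebraMap F L).injective 2
  rw [defectIdx_eq_finrank_isotropicSubmodule]
  refine ⟨exists_subform_of_le_finrank_isotropicSubmodule hα ha hgen c haniso, ?_⟩
  rintro ⟨b, f, hf, hfb⟩
  simpa using le_finrank_isotropicSubmodule_of_subform hα ha hgen c b f hf hfb

/-- Let `F` have characteristic `2`, `φ ≅ ⟨c₀,…,c_{n-1}⟩` an anisotropic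
quasilinear quadratic form over `F`, `a ∈ F ∖ F²`, `L = F(√a)` and `m ≥ 1`.  Then
`i₀(φ_L) ≥ m` iff there is a form `τ = ⟨b₀,…,b_{m-1}⟩` of dimension `m` over `F` such
that `⟨1,a⟩ ⊗ τ` (with coefficients `a^j·bᵢ`, `j ∈ {0,1}`) is isomorphic to a subform
of `φ`. -/
theorem stmt11 (F : Type*) [Field F] [CharP F 2]
    (a : F) (ha : a ∉ Set.range fun x : F => x ^ 2)
    (L : Type*) [Field L] [Algebra F L]
    (α : L) (hα : α ^ 2 = algebraMap F L a) (hgen : Algebra.adjoin F {α} = ⊤)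
    (n : ℕ) (c : Fin n → F)
    (haniso : ∀ x : Fin n → F, ∑ i, c i * x i ^ 2 = 0 → x = 0)
    (m : ℕ) (hm : 0 < m) :
    m ≤ defectIdx 2 L (fun i => algebraMap F L (c i)) ↔
      ∃ b : Fin m → F, ∃ f : (Fin 2 × Fin m → F) →ₗ[F] (Fin n → F),
        Function.Injective f ∧
        ∀ v : Fin 2 × Fin m → F,
          ∑ i, c i * (f v) i ^ 2 = ∑ ji : Fin 2 × Fin m, a ^ (ji.1 : ℕ) * b ji.2 * v ji ^ 2 :=
  stmt11_general F a ha L α hα hgen n c haniso m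
end

section
/- Let φ be an anisotropic quasilinear p-form over a field F of characteristic p, a ∈ F \ F^p, and m a positive integer. If (p² − p − 1)·i₀(φ_{F(a^{1/p})}) − (p² − 2p)·dim φ ≥ m, then there exists a quasilinear p-form τ of dimension m over F such that ⟪a⟫ ⊗ τ is isomorphic to a subform of φ. -/
/-!
Let `k = F^p` and `K = k(a)`, so `[K : k] = p`. The values of `φ = ⟨c⟩` form the `k`-space
`V = span_k c`, of dimension `n` because `φ` is anisotropic, and `⟪a⟫ ⊗ τ` is a subform of `φ` as
soon as the `K`-span of the coefficients of `τ` lies in `V`; so it suffices to find an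
`m`-dimensional `K`-subspace of `V`. The largest one is `⋂_{j<p} a^{-j} V`, an intersection of `p`
subspaces of codimension `dim E - n` in the `K`-span `E` of `V`. Semilinear rank–nullity for
`⟪a⟫ ⊗ φ`, whose isotropic space over `F` is that of `φ_L` viewed over `F`, gives
`dim_k E = p (n - i₀(φ_L))`, and the hypothesis on `m` makes the resulting bound large enough.
-/

open scoped BigOperators

open Module Submodule Set

section QuasilinearForm

variable {p : ℕ} [Fact p.Prime] {F : Type*} [Field F] [CharP F p]

noncomputable abbrev frobeniusRange (p : ℕ) (F : Type*) [Field F] [Fact p.Prime] [CharP F p] :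
    Subfield F :=
  (frobenius F p).fieldRange

theorem pow_mem_frobeniusRange (x : F) : x ^ p ∈ frobeniusRange p F :=
  ⟨x, frobenius_def p x⟩

theorem exists_pow_eq_of_mem_frobeniusRange {t : F} (ht : t ∈ frobeniusRange p F) :
    ∃ x : F, x ^ p = t := by
  obtain ⟨x, rfl⟩ := ht
  exact ⟨x, (frobenius_def p x).symm⟩

variable {ι κ : Type*} [Fintype ι] [Fintype κ]

def quasilinearForm (p : ℕ) [Fact p.Prime] [CharP F p] (g : ι → F) :
    (ι → F) →ₛₗ[frobenius F p] F where
  toFun x := ∑ i, g i * x i ^ p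
  map_add' x y := by simp only [Pi.add_apply, add_pow_char, mul_add, Finset.sum_add_distrib]
  map_smul' t x := by
    simp only [Pi.smul_apply, smul_eq_mul, mul_pow, frobenius_def, Finset.mul_sum]
    exact Finset.sum_congr rfl fun i _ => by ring

@[simp]
theorem quasilinearForm_apply (g : ι → F) (x : ι → F) :
    quasilinearForm p g x = ∑ i, g i * x i ^ p := rfl

theorem mem_span_range_iff_exists_quasilinearForm_eq (g : ι → F) (y : F) :
    y ∈ span (frobeniusRange p F) (range g) ↔ ∃ x, quasilinearForm p g x = y := by
  rw [mem_span_range_iff_exists_fun]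
  constructor
  · rintro ⟨u, rfl⟩
    choose x hx using fun i => exists_pow_eq_of_mem_frobeniusRange (u i).2
    exact ⟨x, Finset.sum_congr rfl fun i _ => by rw [hx, mul_comm]; rfl⟩
  · rintro ⟨x, rfl⟩
    exact ⟨fun i => ⟨x i ^ p, pow_mem_frobeniusRange _⟩,
      Finset.sum_congr rfl fun i _ => mul_comm _ _⟩

theorem quasilinearForm_eq_zero_iff_of_linearIndependent {g : ι → F}
    (hg : LinearIndependent (frobeniusRange p F) g) {x : ι → F} :
    quasilinearForm p g x = 0 ↔ x = 0 := by
  refine ⟨fun hx => ?_, fun hx => by rw [hx, map_zero]⟩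
  have hu := Fintype.linearIndependent_iff.mp hg (fun i => ⟨x i ^ p, pow_mem_frobeniusRange _⟩)
    (by rw [← hx]; exact Finset.sum_congr rfl fun i _ => mul_comm _ _)
  funext i
  exact pow_eq_zero_iff (Fact.out : p.Prime).ne_zero |>.mp congr($(hu i).val)

/-- Semilinear rank–nullity: `x ↦ ∑ gᵢ xᵢ ^ p` is Frobenius-semilinear from `F^ι` onto the
`F^p`-span of the coefficients. -/
theorem finrank_ker_quasilinearForm_add_finrank_span (g : ι → F) :
    finrank F (LinearMap.ker (quasilinearForm p g)) +
      finrank (frobeniusRange p F) (span (frobeniusRange p F) (range g)) = Fintype.card ι := by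
  set Q := quasilinearForm p g
  obtain ⟨C, hC⟩ := (LinearMap.ker Q).exists_isCompl
  let j : C →+ span (frobeniusRange p F) (range g) :=
    { toFun := fun x => ⟨Q x, (mem_span_range_iff_exists_quasilinearForm_eq g _).mpr ⟨x, rfl⟩⟩
      map_zero' := by simp
      map_add' := fun x y => by ext; simp only [Submodule.coe_add, map_add] }
  have hj : Function.Bijective j := by
    refine ⟨fun x y hxy => ?_, fun ⟨z, hz⟩ => ?_⟩
    · have hxy : Q (x - y : C) = 0 := by
        rw [Submodule.coe_sub, map_sub, sub_eq_zero]; exact congr($(hxy).val)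
      have := hC.disjoint.le_bot ⟨hxy, (x - y).2⟩
      rwa [Submodule.mem_bot, ZeroMemClass.coe_eq_zero, sub_eq_zero] at this
    · obtain ⟨x, rfl⟩ := (mem_span_range_iff_exists_quasilinearForm_eq g z).mp hz
      obtain ⟨y, hy, w, hw, rfl⟩ := Submodule.mem_sup.mp (hC.codisjoint.eq_top ▸ mem_top : x ∈ _)
      refine ⟨⟨w, hw⟩, Subtype.ext ?_⟩
      change Q w = Q (y + w)
      rw [map_add, LinearMap.mem_ker.mp hy, zero_add]
  have hrank := congrArg Cardinal.toNat <| lift_rank_eq_of_equiv_equiv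
    (frobenius F p).rangeRestrictField (AddEquiv.ofBijective j hj)
    (frobenius F p).rangeRestrictField_bijective fun t x => Subtype.ext (Q.map_smulₛₗ t x)
  rw [Cardinal.toNat_lift, Cardinal.toNat_lift, ← finrank, ← finrank] at hrank
  rw [← hrank, ← finrank_fintype_fun_eq_card F, finrank_add_eq_of_isCompl hC]

theorem finrank_span_eq_card_of_anisotropic {c : ι → F}
    (hc : ∀ x, quasilinearForm p c x = 0 → x = 0) :
    finrank (frobeniusRange p F) (span (frobeniusRange p F) (range c)) = Fintype.card ι := by
  have := finrank_ker_quasilinearForm_add_finrank_span (p := p) c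
  rwa [LinearMap.ker_eq_bot'.mpr hc, finrank_bot, zero_add] at this

theorem exists_injective_quasilinearForm_comp_eq {c : ι → F} {e : κ → F}
    (he : LinearIndependent (frobeniusRange p F) e)
    (hmem : ∀ s, e s ∈ span (frobeniusRange p F) (range c)) :
    ∃ f : (κ → F) →ₗ[F] (ι → F), Function.Injective f ∧
      ∀ v, quasilinearForm p c (f v) = quasilinearForm p e v := by
  choose x hx using fun s => (mem_span_range_iff_exists_quasilinearForm_eq c (e s)).mp (hmem s)
  let f := Fintype.linearCombination F x
  have hQ : ∀ v, quasilinearForm p c (f v) = quasilinearForm p e v := fun v => by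
    simp only [f, Fintype.linearCombination_apply, map_sum, LinearMap.map_smulₛₗ, hx,
      frobenius_def, smul_eq_mul, quasilinearForm_apply e]
    exact Finset.sum_congr rfl fun s _ => mul_comm _ _
  refine ⟨f, ?_, hQ⟩
  rw [← LinearMap.ker_eq_bot, LinearMap.ker_eq_bot']
  intro v hv
  rw [← quasilinearForm_eq_zero_iff_of_linearIndependent he, ← hQ, hv, map_zero]

end QuasilinearForm

theorem Submodule.finrank_restrictScalars_eq_mul (R S : Type*) {M : Type*} [Field R] [Field S]
    [Algebra R S] [AddCommGroup M] [Module R M] [Module S M] [IsScalarTower R S M]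
    [FiniteDimensional R S] (N : Submodule S M) [FiniteDimensional S N] :
    finrank R (N.restrictScalars R) = finrank R S * finrank S N := by
  rw [finrank_mul_finrank R S N]
  exact ((N.restrictScalarsEquiv R S).restrictScalars R).finrank_eq

theorem Submodule.finrank_sub_sum_le_finrank_finsetInf_inf {K V ι : Type*} [Field K]
    [AddCommGroup V] [Module K V] [DecidableEq ι] (M : Submodule K V) [FiniteDimensional K M]
    (U : ι → Submodule K V) (s : Finset ι) (hU : ∀ i ∈ s, U i ≤ M) :
    (finrank K M : ℤ) - ∑ i ∈ s, ((finrank K M : ℤ) - finrank K (U i)) ≤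
      finrank K ↥(s.inf U ⊓ M) := by
  induction s using Finset.induction_on with
  | empty => rw [Finset.inf_empty, top_inf_eq, Finset.sum_empty, sub_zero]
  | insert i s hi ih =>
    have hUi : U i ≤ M := hU i (Finset.mem_insert_self i s)
    have ih := ih fun j hj => hU j (Finset.mem_insert_of_mem hj)
    have : FiniteDimensional K (U i) := finiteDimensional_of_le hUi
    have : FiniteDimensional K ↥(s.inf U ⊓ M) := finiteDimensional_of_le inf_le_right
    have hsum := finrank_sup_add_finrank_inf_eq (U i) (s.inf U ⊓ M)
    have hsup := finrank_mono (sup_le hUi (inf_le_right : s.inf U ⊓ M ≤ M))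
    rw [Finset.sum_insert hi, Finset.inf_insert, inf_assoc]
    linarith

section Core

variable {R S M : Type*} [CommRing R] [CommRing S] [AddCommGroup M] [Module R M] [Module S M]

/-- The largest `S`-submodule of `M` contained in the `R`-submodule `V`. -/
def Submodule.core (S : Type*) [CommRing S] [Module S M] (V : Submodule R M) : Submodule S M where
  carrier := {z | ∀ y : S, y • z ∈ V}
  add_mem' hx hy y := by rw [smul_add]; exact add_mem (hx y) (hy y)
  zero_mem' y := by rw [smul_zero]; exact zero_mem V
  smul_mem' t z hz y := by rw [smul_smul]; exact hz (y * t)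

theorem Submodule.mem_of_mem_core {V : Submodule R M} {z : M} (hz : z ∈ V.core S) : z ∈ V := by
  simpa using hz 1

variable [Algebra R S] [IsScalarTower R S M] {ι : Type*} [Fintype ι]

theorem Submodule.mem_core_iff (β : Basis ι R S) (V : Submodule R M) (z : M) :
    z ∈ V.core S ↔ ∀ i, β i • z ∈ V := by
  refine ⟨fun hz i => hz (β i), fun hz y => ?_⟩
  rw [← β.sum_repr y, Finset.sum_smul]
  exact sum_mem fun i _ => by rw [smul_assoc]; exact V.smul_mem _ (hz i)

end Core

section CoreDimension

variable {R S M : Type*} [Field R] [Field S] [AddCommGroup M] [Module R M] [Module S M]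
  [Algebra R S] [IsScalarTower R S M] {ι : Type*}

theorem exists_linearIndependent_smul_of_le_finrank (β : Basis ι R S) (W : Submodule S M) {m : ℕ}
    (hm : m ≤ finrank S W) :
    ∃ b : Fin m → M, (∀ i, b i ∈ W) ∧
      LinearIndependent R fun ji : ι × Fin m => β ji.1 • b ji.2 := by
  obtain ⟨b, hb⟩ := exists_linearIndependent_of_le_finrank hm
  exact ⟨W.subtype ∘ b, fun i => (b i).2,
    linearIndependent_smul β.linearIndependent (hb.map' W.subtype W.ker_subtype)⟩

variable [Fintype ι]

/-- Over `R`, `V.core S` is the intersection of the `[S : R]` subspaces `(β i)⁻¹ • V` of `E`,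
each of codimension `dim E - dim V`. -/
theorem Submodule.finrank_sub_le_card_mul_finrank_core (β : Basis ι R S) {V : Submodule R M}
    {E : Submodule S M} [FiniteDimensional S E] (hVE : V ≤ E.restrictScalars R) :
    (finrank R (E.restrictScalars R) : ℤ) -
        Fintype.card ι * (finrank R (E.restrictScalars R) - finrank R V) ≤
      Fintype.card ι * finrank S (V.core S) := by
  classical
  have : FiniteDimensional R S := β.finiteDimensional_of_finite
  have : Module.Finite S (E.restrictScalars R) := .equiv (E.restrictScalarsEquiv R S).symm
  have : FiniteDimensional R (E.restrictScalars R) := Module.Finite.trans S _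
  have : FiniteDimensional S (V.core S) :=
    finiteDimensional_of_le fun _ hz => hVE (mem_of_mem_core hz)
  let mul (i : ι) : M ≃ₗ[R] M :=
    (LinearEquiv.smulOfNeZero S M (β i) (β.ne_zero i)).restrictScalars R
  let U (i : ι) : Submodule R M := V.comap (mul i : M →ₗ[R] M)
  have hU : ∀ i ∈ Finset.univ, U i ≤ E.restrictScalars R := fun i _ z hz => by
    have : (β i)⁻¹ • β i • z ∈ E := E.smul_mem _ (hVE hz)
    rwa [inv_smul_smul₀ (β.ne_zero i)] at this
  have hUrank : ∀ i, finrank R (U i) = finrank R V := fun i => by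
    change finrank R (V.comap (mul i : M →ₗ[R] M)) = _
    rw [comap_equiv_eq_map_symm, LinearEquiv.finrank_map_eq]
  have hcore : (V.core S).restrictScalars R = Finset.univ.inf U ⊓ E.restrictScalars R := by
    ext z
    simp only [restrictScalars_mem, mem_inf, mem_finsetInf, Finset.mem_univ, true_imp_iff]
    exact ⟨fun hz => ⟨(mem_core_iff β V z).mp hz, hVE (mem_of_mem_core hz)⟩,
      fun hz => (mem_core_iff β V z).mpr hz.1⟩
  have := finrank_sub_sum_le_finrank_finsetInf_inf _ U Finset.univ hU
  simp only [hUrank, Finset.sum_const, Finset.card_univ, nsmul_eq_mul] at this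
  rwa [← hcore, finrank_restrictScalars_eq_mul R S (V.core S), finrank_eq_card_basis β,
    Nat.cast_mul] at this

end CoreDimension

section PowerBasis

open Polynomial IntermediateField

theorem PowerBasis.exists_basis_fin_pow {K E : Type*} [Field K] [Field E] [Algebra K E]
    (pb : PowerBasis K E) {p : ℕ} (hp : p.Prime) {y : K} (hgen : pb.gen ^ p = algebraMap K E y)
    (hy : ∀ b : K, b ^ p ≠ y) : ∃ β : Basis (Fin p) K E, ∀ j : Fin p, β j = pb.gen ^ (j : ℕ) := by
  have hmin : minpoly K pb.gen = X ^ p - C y :=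
    (minpoly.eq_of_irreducible_of_monic (X_pow_sub_C_irreducible_of_prime hp hy)
      (by simp [hgen]) (monic_X_pow_sub_C y hp.ne_zero)).symm
  have hdim : pb.dim = p := by
    rw [← pb.natDegree_minpoly, hmin, natDegree_X_pow_sub_C]
  exact ⟨pb.basis.reindex (finCongr hdim), fun j => by simp⟩

variable {K E : Type*} [Field K] [Field E] [Algebra K E] {p : ℕ} {x : E} {y : K}

theorem exists_basis_pow_of_adjoin_eq_top_s12 (hp : p.Prime) (hx : x ^ p = algebraMap K E y)
    (hy : ∀ b : K, b ^ p ≠ y) (htop : Algebra.adjoin K {x} = ⊤) :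
    ∃ β : Basis (Fin p) K E, ∀ j : Fin p, β j = x ^ (j : ℕ) := by
  have hint : IsIntegral K x := IsIntegral.of_pow hp.pos (hx ▸ isIntegral_algebraMap)
  let pb := (Algebra.adjoin.powerBasis hint).map
    ((Subalgebra.equivOfEq _ _ htop).trans Subalgebra.topEquiv)
  have hgen : pb.gen = x := by simp [pb, Algebra.adjoin.powerBasis_gen]
  exact hgen ▸ pb.exists_basis_fin_pow hp (hgen ▸ hx) hy

theorem exists_basis_pow_adjoin_simple (hp : p.Prime) (hx : x ^ p = algebraMap K E y)
    (hy : ∀ b : K, b ^ p ≠ y) :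
    ∃ β : Basis (Fin p) K K⟮x⟯, ∀ j : Fin p, (β j : E) = x ^ (j : ℕ) := by
  have hint : IsIntegral K x := IsIntegral.of_pow hp.pos (hx ▸ isIntegral_algebraMap)
  obtain ⟨β, hβ⟩ := (adjoin.powerBasis hint).exists_basis_fin_pow hp
    (Subtype.ext (by simpa using hx)) hy
  exact ⟨β, fun j => by simp [hβ]⟩

end PowerBasis

section BaseChange

variable {p : ℕ} [Fact p.Prime] {F : Type*} [Field F] [CharP F p] {L : Type*} [Field L]
  [Algebra F L] [CharP L p] {ι κ : Type*} [Fintype ι] [Fintype κ]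

theorem defectIdx_eq_finrank_ker (b : ι → L) :
    defectIdx p L b = finrank L (LinearMap.ker (quasilinearForm p b)) := by
  rw [defectIdx, ← span_eq (LinearMap.ker (quasilinearForm p b))]
  rfl

/-- Writing the variables of `⟨c⟩_L` in the basis `β` turns it into `⟨γ⟩ ⊗ ⟨c⟩` over `F`. -/
theorem finrank_ker_quasilinearForm_of_basis (β : Basis κ F L) {γ : κ → F}
    (hβ : ∀ j, β j ^ p = algebraMap F L (γ j)) (c : ι → F) :
    finrank F (LinearMap.ker (quasilinearForm p fun ji : κ × ι => γ ji.1 * c ji.2)) =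
      finrank F L *
        finrank L (LinearMap.ker (quasilinearForm p fun i => algebraMap F L (c i))) := by
  have : FiniteDimensional F L := β.finiteDimensional_of_finite
  let Φ : (κ × ι → F) ≃ₗ[F] (ι → L) :=
    (LinearEquiv.funCongrLeft F F (Equiv.prodComm ι κ)).trans
      ((LinearEquiv.curry F F ι κ).trans (LinearEquiv.piCongrRight fun _ => β.equivFun.symm))
  have hΦ : ∀ y i, Φ y i = ∑ j, y (j, i) • β j := fun y i => by
    simp [Φ, Basis.equivFun_symm_apply]
  have hval : ∀ y, quasilinearForm p (fun i => algebraMap F L (c i)) (Φ y) =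
      algebraMap F L (quasilinearForm p (fun ji : κ × ι => γ ji.1 * c ji.2) y) := fun y => by
    simp only [quasilinearForm_apply, hΦ, sum_pow_char, Algebra.smul_def, mul_pow, hβ, map_sum,
      map_mul, map_pow, Finset.mul_sum, Fintype.sum_prod_type]
    rw [Finset.sum_comm]
    exact Finset.sum_congr rfl fun j _ => Finset.sum_congr rfl fun i _ => by ring
  have hker : LinearMap.ker (quasilinearForm p fun ji : κ × ι => γ ji.1 * c ji.2) =
      ((LinearMap.ker (quasilinearForm p fun i => algebraMap F L (c i))).restrictScalars F).comap
        (Φ : (κ × ι → F) →ₗ[F] (ι → L)) := by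
    ext y
    simp only [LinearMap.mem_ker, mem_comap, restrictScalars_mem, LinearEquiv.coe_coe, hval,
      FaithfulSMul.algebraMap_eq_zero_iff]
  rw [hker, comap_equiv_eq_map_symm, LinearEquiv.finrank_map_eq,
    Submodule.finrank_restrictScalars_eq_mul]

end BaseChange

section PurelyInseparable

variable {p : ℕ} [Fact p.Prime] {F : Type*} [Field F] [CharP F p] {a : F} {ι : Type*}

theorem exists_basis_pow_adjoin_frobeniusRange (ha : a ∉ range fun x : F => x ^ p) :
    ∃ β : Basis (Fin p) (frobeniusRange p F) (IntermediateField.adjoin (frobeniusRange p F) {a}),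
      ∀ j : Fin p, (β j : F) = a ^ (j : ℕ) := by
  refine exists_basis_pow_adjoin_simple Fact.out (y := ⟨a ^ p, pow_mem_frobeniusRange a⟩) rfl ?_
  rintro b hb
  obtain ⟨x, hx⟩ := b.2
  exact ha ⟨x, (frobenius_inj F p) (by simpa [frobenius_def, ← hx] using congr($(hb).val))⟩

theorem restrictScalars_span_adjoin_eq_span_pow_mul (ha : a ∉ range fun x : F => x ^ p)
    (c : ι → F) :
    (span (IntermediateField.adjoin (frobeniusRange p F) {a}) (range c)).restrictScalars
        (frobeniusRange p F) =
      span (frobeniusRange p F) (range fun ji : Fin p × ι => a ^ (ji.1 : ℕ) * c ji.2) := by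
  obtain ⟨β, hβ⟩ := exists_basis_pow_adjoin_frobeniusRange ha
  rw [← span_smul_of_span_eq_top β.span_eq, range_smul_range]
  simp [hβ, IntermediateField.smul_def]

theorem finrank_span_pow_mul_add_mul_defectIdx [Fintype ι] (ha : a ∉ range fun x : F => x ^ p)
    {L : Type*} [Field L] [Algebra F L] {α : L} (hα : α ^ p = algebraMap F L a)
    (hgen : Algebra.adjoin F {α} = ⊤) (c : ι → F) :
    finrank (frobeniusRange p F)
        (span (frobeniusRange p F) (range fun ji : Fin p × ι => a ^ (ji.1 : ℕ) * c ji.2)) +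
      p * defectIdx p L (fun i => algebraMap F L (c i)) = p * Fintype.card ι := by
  have : CharP L p := charP_of_injective_algebraMap (algebraMap F L).injective p
  obtain ⟨β, hβ⟩ := exists_basis_pow_of_adjoin_eq_top_s12 Fact.out hα (fun b hb => ha ⟨b, hb⟩) hgen
  have hker := finrank_ker_quasilinearForm_of_basis β (γ := fun j : Fin p => a ^ (j : ℕ))
    (fun j => by rw [hβ, ← pow_mul, mul_comm, pow_mul, hα, map_pow]) c
  rw [← defectIdx_eq_finrank_ker (fun i => algebraMap F L (c i)), finrank_eq_card_basis β,
    Fintype.card_fin] at hker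
  have := finrank_ker_quasilinearForm_add_finrank_span (p := p)
    fun ji : Fin p × ι => a ^ (ji.1 : ℕ) * c ji.2
  rwa [hker, Fintype.card_prod, Fintype.card_fin, add_comm] at this

end PurelyInseparable

theorem stmt12_general {p : ℕ} [Fact p.Prime] (F : Type*) [Field F] [CharP F p]
    (a : F) (ha : a ∉ Set.range fun x : F => x ^ p)
    (L : Type*) [Field L] [Algebra F L]
    (α : L) (hα : α ^ p = algebraMap F L a) (hgen : Algebra.adjoin F {α} = ⊤)
    (n : ℕ) (c : Fin n → F)
    (haniso : ∀ x : Fin n → F, ∑ i, c i * x i ^ p = 0 → x = 0)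
    (m : ℕ)
    (h : (m : ℤ) ≤ ((p : ℤ) ^ 2 - p - 1) *
          (defectIdx p L fun i => algebraMap F L (c i)) - ((p : ℤ) ^ 2 - 2 * p) * n) :
    ∃ b : Fin m → F, ∃ f : (Fin p × Fin m → F) →ₗ[F] (Fin n → F),
      Function.Injective f ∧
      ∀ v : Fin p × Fin m → F,
        ∑ i, c i * (f v) i ^ p = ∑ ji : Fin p × Fin m, a ^ (ji.1 : ℕ) * b ji.2 * v ji ^ p := by
  set k := frobeniusRange p F
  set K := IntermediateField.adjoin k {a}
  obtain ⟨β, hβ⟩ : ∃ β : Basis (Fin p) k K, ∀ j : Fin p, (β j : F) = a ^ (j : ℕ) :=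
    exists_basis_pow_adjoin_frobeniusRange ha
  set V := span k (range c)
  set E := span K (range c)
  have hspan := restrictScalars_span_adjoin_eq_span_pow_mul ha c
  have : FiniteDimensional K E := FiniteDimensional.span_of_finite K (finite_range c)
  have : FiniteDimensional k (E.restrictScalars k) :=
    hspan ▸ FiniteDimensional.span_of_finite k (finite_range _)
  have hV : finrank k V = n := by simpa using finrank_span_eq_card_of_anisotropic haniso
  have hVE : V ≤ E.restrictScalars k := span_le.mpr subset_span
  have hE := finrank_span_pow_mul_add_mul_defectIdx ha hα hgen c
  rw [← hspan, Fintype.card_fin] at hE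
  have hcore := finrank_sub_le_card_mul_finrank_core β hVE
  have hVD := Submodule.finrank_mono hVE
  have hmW : m ≤ finrank K (V.core K) := by
    simp only [Fintype.card_fin, hV] at hcore hVD
    zify at hE hVD
    have hp2 : (2 : ℤ) ≤ p := mod_cast (Fact.out : p.Prime).two_le
    -- the bound obtained is `(p - 1) i₀ - (p - 2) n`, which exceeds the hypothesis' bound
    -- by `(p - 2) (dim E - n) ≥ 0`
    have : (p : ℤ) * m ≤ p * finrank K (V.core K) := by
      nlinarith [mul_nonneg (mul_nonneg (by linarith : (0 : ℤ) ≤ p) (by linarith : (0 : ℤ) ≤ p - 2))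
        (sub_nonneg.mpr hVD)]
    exact_mod_cast le_of_mul_le_mul_left this (by linarith)
  obtain ⟨b, hbW, hli⟩ := exists_linearIndependent_smul_of_le_finrank β (V.core K) hmW
  obtain ⟨f, hf, hQ⟩ := exists_injective_quasilinearForm_comp_eq hli
    fun ji => mem_of_mem_core ((V.core K).smul_mem _ (hbW ji.2))
  exact ⟨b, f, hf, fun v => by simpa [hβ, IntermediateField.smul_def] using hQ v⟩

/-- Let `φ ≅ ⟨c₀,…,c_{n-1}⟩` be an anisotropic quasilinear `p`-form over
`F` (char `p`), `a ∈ F ∖ F^p` with `L = F(a^{1/p})`, and `m ≥ 1`.  If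
`(p² − p − 1)·i₀(φ_L) − (p² − 2p)·dim φ ≥ m` (in `ℤ`), then there is a form
`τ = ⟨b₀,…,b_{m-1}⟩` of dimension `m` over `F` such that `⟪a⟫ ⊗ τ` (with coefficients
`a^j·bᵢ`, `0 ≤ j < p`) is isomorphic to a subform of `φ`. -/
theorem stmt12 {p : ℕ} [Fact p.Prime] (F : Type*) [Field F] [CharP F p]
    (a : F) (ha : a ∉ Set.range fun x : F => x ^ p)
    (L : Type*) [Field L] [Algebra F L]
    (α : L) (hα : α ^ p = algebraMap F L a) (hgen : Algebra.adjoin F {α} = ⊤)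
    (n : ℕ) (c : Fin n → F)
    (haniso : ∀ x : Fin n → F, ∑ i, c i * x i ^ p = 0 → x = 0)
    (m : ℕ) (hm : 0 < m)
    (h : (m : ℤ) ≤ ((p : ℤ) ^ 2 - p - 1) *
          (defectIdx p L fun i => algebraMap F L (c i)) - ((p : ℤ) ^ 2 - 2 * p) * n) :
    ∃ b : Fin m → F, ∃ f : (Fin p × Fin m → F) →ₗ[F] (Fin n → F),
      Function.Injective f ∧
      ∀ v : Fin p × Fin m → F,
        ∑ i, c i * (f v) i ^ p = ∑ ji : Fin p × Fin m, a ^ (ji.1 : ℕ) * b ji.2 * v ji ^ p :=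
  stmt12_general F a ha L α hα hgen n c haniso m h
end

section
/- Let X be a complete (proper) variety over a field k, and let K, L be field extensions of k such that there exists a k-place K ⇀ L. If X has a K-rational point, then X has an L-rational point. -/
/-!
Extend the `K`-point to an `R`-point by the valuative criterion of properness, then specialise
it along the place `R → L`.
-/

open AlgebraicGeometry CategoryTheory

universe u

namespace AlgebraicGeometry

theorem UniversallyClosed.valuativeCriterion_existence {X Y : Scheme.{u}} (f : X ⟶ Y)
    [UniversallyClosed f] : ValuativeCriterion.Existence f :=
  (UniversallyClosed.eq_valuativeCriterion ▸ ‹UniversallyClosed f›).1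

theorem UniversallyClosed.exists_lift_of_valuationSubring {X Y : Scheme.{u}} (f : X ⟶ Y)
    [UniversallyClosed f] {K : Type u} [Field K] (R : ValuationSubring K)
    (xK : Spec (.of K) ⟶ X) (y : Spec (.of R) ⟶ Y)
    (h : xK ≫ f = Spec.map (CommRingCat.ofHom (algebraMap R K)) ≫ y) :
    ∃ l : Spec (.of R) ⟶ X, Spec.map (CommRingCat.ofHom (algebraMap R K)) ≫ l = xK ∧ l ≫ f = y :=
  have ⟨⟨hl⟩⟩ := valuativeCriterion_existence f ⟨R, K, xK, y, ⟨h⟩⟩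
  ⟨hl.l, hl.fac_left, hl.fac_right⟩

end AlgebraicGeometry

theorem stmt14_general (k K L : Type u) [Field k] [Field K] [Field L]
    [Algebra k K] [Algebra k L]
    (X : Scheme.{u})
    (f : X ⟶ Spec (CommRingCat.of k)) [IsProper f]
    (R : ValuationSubring K) (hR : ∀ x : k, algebraMap k K x ∈ R)
    (g : R →+* L)
    (hg : ∀ x : k, g ⟨algebraMap k K x, hR x⟩ = algebraMap k L x)
    (xK : Spec (CommRingCat.of K) ⟶ X)
    (hxK : xK ≫ f = Spec.map (CommRingCat.ofHom (algebraMap k K))) :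
    ∃ xL : Spec (CommRingCat.of L) ⟶ X,
      xL ≫ f = Spec.map (CommRingCat.ofHom (algebraMap k L)) := by
  let φ : k →+* R := (algebraMap k K).codRestrict R.toSubring hR
  obtain ⟨l, -, hl⟩ := UniversallyClosed.exists_lift_of_valuationSubring f R xK
    (Spec.map (CommRingCat.ofHom φ)) (by rw [hxK, ← Spec.map_comp]; rfl)
  refine ⟨Spec.map (CommRingCat.ofHom g) ≫ l, ?_⟩
  rw [Category.assoc, hl, ← Spec.map_comp, ← CommRingCat.ofHom_comp]
  congr 2
  exact RingHom.ext hg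

/-- Let `X` be a complete (proper, integral) variety over a field `k`,
and `K`, `L` field extensions of `k` admitting a `k`-place `K ⇀ L` (a local `k`-algebra
homomorphism `g : R → L` from a valuation subring `R` of `K` containing `k`).  If `X`
has a `K`-rational point, then `X` has an `L`-rational point. -/
theorem stmt14 (k K L : Type u) [Field k] [Field K] [Field L]
    [Algebra k K] [Algebra k L]
    (X : Scheme.{u}) [IsIntegral X]
    (f : X ⟶ Spec (CommRingCat.of k)) [IsProper f] [LocallyOfFiniteType f]
    (R : ValuationSubring K) (hR : ∀ x : k, algebraMap k K x ∈ R)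
    (g : R →+* L) [IsLocalHom g]
    (hg : ∀ x : k, g ⟨algebraMap k K x, hR x⟩ = algebraMap k L x)
    (xK : Spec (CommRingCat.of K) ⟶ X)
    (hxK : xK ≫ f = Spec.map (CommRingCat.ofHom (algebraMap k K))) :
    ∃ xL : Spec (CommRingCat.of L) ⟶ X,
      xL ≫ f = Spec.map (CommRingCat.ofHom (algebraMap k L)) :=
  stmt14_general k K L X f R hR g hg xK hxK
end
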